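/- arXiv:2604.15818 — 9 statements merged into one kernel-verified Lean document; each statement's English description precedes it below -/
import Mathlib

section
/- Let H be a compact metrizable topological group with normalized Haar probability measure ν, and let W ⊆ H be compact with W = closure(interior W). Then W is irredundant (for all ξ ∈ H, Wξ = W implies ξ = 1_H) if and only if W is Haar aperiodic (for all ξ ∈ H, ν(W Δ Wξ) = 0 implies ξ = 1_H). -/
open MeasureTheory Filter Set Topology
open scoped symmDiff ENNReal

/-- Extended logarithm of an `ℝ≥0∞` value, with `eLog 0 = ⊥` and `eLog ⊤ = ⊤`. -/
noncomputable def eLog (x : ℝ≥0∞) : EReal :=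
  if x = 0 then ⊥ else if x = ⊤ then ⊤ else ((Real.log x.toReal : ℝ) : EReal)

/-- Maximal cardinality (in `ℝ≥0∞`) of an `ε`-separated subset of `S` w.r.t. `d`. -/
noncomputable def sepCount {Z : Type*} (S : Set Z) (d : Z → Z → ℝ) (ε : ℝ) : ℝ≥0∞ :=
  ⨆ (A : Finset Z) (_ : ↑A ⊆ S ∧ (A : Set Z).Pairwise fun z z' => ε ≤ d z z'), (A.card : ℝ≥0∞)

/-- The quantity `log Sep(S, d, ε) / (- log ε)`, as an extended real. -/
noncomputable def acRatio {Z : Type*} (S : Set Z) (d : Z → Z → ℝ) (ε : ℝ) : EReal :=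
  eLog (sepCount S d ε) * (((-Real.log ε)⁻¹ : ℝ) : EReal)

open Classical in
/-- `F` is a left Følner sequence in the group `G`. -/
def IsFolner {G : Type*} [Group G] (F : ℕ → Finset G) : Prop :=
  (∀ n, (F n).Nonempty) ∧ ∀ g : G,
    Filter.Tendsto
      (fun n => ((((F n).image fun h => g * h) ∆ F n).card : ℝ) / ((F n).card : ℝ))
      Filter.atTop (nhds 0)

/-- The Besicovitch pseudometric w.r.t. the sequence `F`. -/
noncomputable def besicovitchDist {G : Type*} (F : ℕ → Finset G) (x y : G → Bool) : ℝ :=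
  Filter.limsup (fun n => (((F n).filter fun g => x g ≠ y g).card : ℝ) / ((F n).card : ℝ))
    Filter.atTop

open Classical in
/-- The symbolic model set (as a 0-1 array) associated to a window `W ⊆ H`. -/
noncomputable def modelSet {G H : Type*} (τ : G → H) (W : Set H) : G → Bool :=
  fun g => decide (τ g ∈ W)

/-- Orbit closure of `x` under the left shift `(g·x)(h) = x(hg)`, in the product topology. -/
def shiftOrbitClosure {G : Type*} [Group G] (x : G → Bool) : Set (G → Bool) :=
  closure { y : G → Bool | ∃ g : G, y = fun h => x (h * g) }

/-- `Per(x, Γ, α)`, the set of `Γ`-periodic positions of `x` with value `α`. -/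
def perA {G : Type*} [Group G] (x : G → Bool) (Γ : Subgroup G) (α : Bool) : Set G :=
  { g : G | ∀ γ ∈ Γ, x (g * γ) = α }

/-- `Per(x, Γ) = Per(x,Γ,0) ∪ Per(x,Γ,1)`. -/
def perSet {G : Type*} [Group G] (x : G → Bool) (Γ : Subgroup G) : Set G :=
  perA x Γ false ∪ perA x Γ true

/-- `E` is a fundamental domain of `G/Γ`: `g ↦ gΓ` is a bijection from `E` onto `G/Γ`. -/
def IsFundDom {G : Type*} [Group G] (Γ : Subgroup G) (E : Finset G) : Prop :=
  ∀ g : G, ∃! d, d ∈ E ∧ g⁻¹ * d ∈ Γ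

/-- The density `D(x,Γ)` of `Per(x,Γ)` computed in a fundamental domain `E`. -/
noncomputable def perDensity {G : Type*} [Group G] (x : G → Bool) (Γ : Subgroup G)
    (E : Finset G) : ℝ :=
  (((E : Set G) ∩ perSet x Γ).ncard : ℝ) / (E.card : ℝ)

/-- The regularity constant `𝒟(x)`. -/
noncomputable def regConst {G : Type*} [Group G] (x : G → Bool) : ℝ :=
  sSup { r : ℝ | ∃ (Γ : Subgroup G) (E : Finset G),
    Γ.FiniteIndex ∧ IsFundDom Γ E ∧ r = perDensity x Γ E }

/-!
A set equal to the closure of its interior is determined by its interior, and an open set of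
Haar measure zero is empty. So if `W` and its translate `Wξ` differ by a null set, each one's
interior lies in the other, hence (both being closed) `W = Wξ`.
-/

section RegularClosed

variable {X : Type*} [TopologicalSpace X] [MeasurableSpace X] {μ : Measure X}
  [μ.IsOpenPosMeasure] {A B : Set X}

theorem subset_of_measure_diff_eq_zero (hA : A = closure (interior A)) (hB : IsClosed B)
    (h : μ (A \ B) = 0) : A ⊆ B := by
  have hnull : interior (A \ B) = ∅ := μ.interior_eq_empty_of_null h
  have hint : interior A ⊆ B := fun x hx => by
    by_contra hxB
    have : interior A \ B ⊆ interior (A \ B) :=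
      interior_maximal (sdiff_subset_sdiff_left interior_subset) (isOpen_interior.sdiff hB)
    simpa [hnull] using this ⟨hx, hxB⟩
  rw [hA]
  exact closure_minimal hint hB

theorem eq_of_measure_symmDiff_eq_zero (hA : A = closure (interior A))
    (hB : B = closure (interior B)) (h : μ (A ∆ B) = 0) : A = B :=
  (subset_of_measure_diff_eq_zero hA (hB ▸ isClosed_closure)
      (measure_mono_null (fun _ hx => Or.inl hx) h)).antisymm
    (subset_of_measure_diff_eq_zero hB (hA ▸ isClosed_closure)
      (measure_mono_null (fun _ hx => Or.inr hx) h))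

end RegularClosed

theorem Homeomorph.image_eq_closure_interior {X Y : Type*} [TopologicalSpace X]
    [TopologicalSpace Y] (e : X ≃ₜ Y) {A : Set X} (hA : A = closure (interior A)) :
    e '' A = closure (interior (e '' A)) := by
  rw [← e.image_interior, ← e.image_closure, ← hA]

theorem stmt_1_general {H : Type*} [Group H] [TopologicalSpace H] [IsTopologicalGroup H]
    [MeasurableSpace H]
    (ν : Measure H) [ν.IsHaarMeasure]
    (W : Set H) (hW : W = closure (interior W)) :
    (∀ ξ : H, (fun w => w * ξ) '' W = W → ξ = 1) ↔
      (∀ ξ : H, ν (W ∆ ((fun w => w * ξ) '' W)) = 0 → ξ = 1) := by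
  refine ⟨fun hirr ξ hnull => hirr ξ ?_, fun hap ξ hfix => hap ξ ?_⟩
  · exact (eq_of_measure_symmDiff_eq_zero hW
      ((Homeomorph.mulRight ξ).image_eq_closure_interior hW) hnull).symm
  · simp [hfix]

/-- For a proper window `W` in a compact metrizable group with normalized Haar
measure, `W` is irredundant if and only if `W` is Haar aperiodic. -/
theorem stmt_1 {H : Type*} [Group H] [TopologicalSpace H] [IsTopologicalGroup H]
    [CompactSpace H] [TopologicalSpace.MetrizableSpace H] [MeasurableSpace H] [BorelSpace H]
    (ν : Measure H) [ν.IsHaarMeasure] [IsProbabilityMeasure ν]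
    (W : Set H) (hWc : IsCompact W) (hW : W = closure (interior W)) :
    (∀ ξ : H, (fun w => w * ξ) '' W = W → ξ = 1) ↔
      (∀ ξ : H, ν (W ∆ ((fun w => w * ξ) '' W)) = 0 → ξ = 1) :=
  stmt_1_general ν W hW
end

section
/- Let G be a countably infinite group, (F_n) a left Følner sequence in G, H a compact metrizable topological group with normalized Haar probability measure ν, and τ : G → H an injective group homomorphism with dense image. Then for all subsets A, B ⊆ H, limsup_{n→∞} (1/#F_n) · #{g ∈ F_n : x_A(g) ≠ x_B(g)} ≤ ν(closure(A Δ B)). In particular, the map A ↦ x_A is continuous from subsets of H with the pseudometric D̄(A,B) = ν(closure(A Δ B)) to {0,1}^G with the Besicovitch pseudometric D_F. -/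
/-!
For continuous `f : H → ℝ` the Følner averages `(∑_{g ∈ Fₙ} f (τ g)) / #Fₙ` tend to `∫ f dν`.
The function `Ψ h = ∑_{g ∈ Fₙ} f (h * τ g)` has integral `#Fₙ * ∫ f dν` by right invariance of
`ν`, and `Ψ (τ g₀)` differs from `Ψ 1` by at most `‖f‖ * #(g₀Fₙ ∆ Fₙ)`. By uniform continuity of
`f` and density of `τ`, every `Ψ h` is close to `Ψ (τ g₀)` for one of finitely many `g₀`, so for
large `n` the function `Ψ / #Fₙ` is almost constant and `Ψ 1 / #Fₙ` is close to its mean.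
Every position where `x_A` and `x_B` differ is visited by `τ` in the closed set
`C = closure (A ∆ B)`, and the upper density of such visits is at most the integral of an Urysohn
function equal to `1` on `C` and supported in an open set of measure close to `ν C`.
-/

open MeasureTheory Filter Set Topology
open scoped symmDiff ENNReal

namespace Finset

lemma card_symmDiff_eq {α : Type*} [DecidableEq α] (s t : Finset α) :
    #(s ∆ t) = #(s \ t) + #(t \ s) :=
  card_union_of_disjoint disjoint_sdiff_sdiff

lemma norm_sum_sub_sum_le_card_symmDiff_mul {α E : Type*} [DecidableEq α]
    [SeminormedAddCommGroup E] (s t : Finset α) {u : α → E} {M : ℝ} (hu : ∀ a, ‖u a‖ ≤ M) :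
    ‖∑ a ∈ s, u a - ∑ a ∈ t, u a‖ ≤ #(s ∆ t) * M := by
  have hsum (w : Finset α) : ‖∑ a ∈ w, u a‖ ≤ #w * M := by
    simpa using norm_sum_le_of_le w fun a _ => hu a
  rw [← sum_sdiff_sub_sum_sdiff, card_symmDiff_eq, Nat.cast_add, add_mul]
  exact (norm_sub_le _ _).trans (add_le_add (hsum _) (hsum _))

lemma norm_sum_mul_left_sub_sum_le {G E : Type*} [Group G] [DecidableEq G]
    [SeminormedAddCommGroup E] (F : Finset G) (g₀ : G) {φ : G → E} {M : ℝ}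
    (hφ : ∀ g, ‖φ g‖ ≤ M) :
    ‖∑ g ∈ F, φ (g₀ * g) - ∑ g ∈ F, φ g‖ ≤ #(F.image (g₀ * ·) ∆ F) * M := by
  rw [← sum_image fun _ _ _ _ => mul_left_cancel]
  exact norm_sum_sub_sum_le_card_symmDiff_mul _ _ hφ

end Finset

section CompactGroup

variable {G H : Type*} [Group H] [TopologicalSpace H] [IsTopologicalGroup H] [CompactSpace H]

lemma Continuous.exists_mem_nhds_one_dist_lt {f : H → ℝ} (hf : Continuous f) {δ : ℝ}
    (hδ : 0 < δ) : ∃ V ∈ 𝓝 (1 : H), ∀ u v, u * v⁻¹ ∈ V → dist (f u) (f v) < δ := by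
  let := IsTopologicalGroup.rightUniformSpace H
  have hfu : UniformContinuous f := CompactSpace.uniformContinuous_of_continuous hf
  obtain ⟨V, hV, hVsub⟩ := mem_comap.1 (hfu (Metric.dist_mem_uniformity hδ))
  exact ⟨V, hV, fun u v huv =>
    dist_comm (f u) (f v) ▸ hVsub (show (v, u).2 * (v, u).1⁻¹ ∈ V from huv)⟩

lemma DenseRange.exists_finset_forall_exists_mul_inv_mem {τ : G → H} (hτ : DenseRange τ)
    {V : Set H} (hV : V ∈ 𝓝 1) : ∃ T : Finset G, ∀ h : H, ∃ g ∈ T, τ g * h⁻¹ ∈ V := by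
  have hopen (g : G) : IsOpen {h : H | τ g * h⁻¹ ∈ interior V} :=
    isOpen_interior.preimage (continuous_const.mul continuous_inv)
  obtain ⟨T, hT⟩ := isCompact_univ.elim_finite_subcover _ hopen fun h _ => by
    obtain ⟨g, hg⟩ := hτ.exists_mem_open (isOpen_interior.preimage (continuous_mul_const h⁻¹))
      ⟨h, by simpa using mem_interior_iff_mem_nhds.2 hV⟩
    exact mem_iUnion.2 ⟨g, hg⟩
  refine ⟨T, fun h => ?_⟩
  obtain ⟨g, hgT, hg⟩ := mem_iUnion₂.1 (hT (mem_univ h))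
  exact ⟨g, hgT, interior_subset hg⟩

variable [MeasurableSpace H] [BorelSpace H]

instance MeasureTheory.Measure.IsHaarMeasure.isMulRightInvariant_of_isProbabilityMeasure
    (ν : Measure H) [ν.IsHaarMeasure] [IsProbabilityMeasure ν] : ν.IsMulRightInvariant := by
  refine ⟨fun g => ?_⟩
  have := Measure.isProbabilityMeasure_map (μ := ν) (measurable_mul_const g).aemeasurable
  exact Measure.isHaarMeasure_eq_of_isProbabilityMeasure _ _

variable [Group G] (ν : Measure H) [ν.IsHaarMeasure] [IsProbabilityMeasure ν]

open Finset in
lemma abs_sum_sub_card_mul_integral_le [DecidableEq G] (τ : G →* H) (f : C(H, ℝ)) {δ : ℝ}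
    {V : Set H} (hV : ∀ u v, u * v⁻¹ ∈ V → dist (f u) (f v) < δ) {T : Finset G}
    (hT : ∀ h, ∃ g ∈ T, τ g * h⁻¹ ∈ V) (F : Finset G) :
    |∑ g ∈ F, f (τ g) - #F * ∫ h, f h ∂ν| ≤
      #F * δ + ‖f‖ * ∑ g ∈ T, (#(F.image (g * ·) ∆ F) : ℝ) := by
  set Ψ : H → ℝ := fun h => ∑ g ∈ F, f (h * τ g)
  have hΨ_integrable : Integrable Ψ ν :=
    (by fun_prop : Continuous Ψ).integrable_of_hasCompactSupport (.of_compactSpace _)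
  have hΨ_integral : ∫ h, Ψ h ∂ν = #F * ∫ h, f h ∂ν := by
    rw [integral_finsetSum _ fun g _ => (by fun_prop : Continuous fun h => f (h * τ g))
      |>.integrable_of_hasCompactSupport (.of_compactSpace _)]
    simp [integral_mul_right_eq_self]
  have hΨ_osc (h : H) :
      |Ψ 1 - Ψ h| ≤ #F * δ + ‖f‖ * ∑ g ∈ T, (#(F.image (g * ·) ∆ F) : ℝ) := by
    obtain ⟨g₀, hg₀T, hg₀⟩ := hT h
    have h_translate : |Ψ (τ g₀) - Ψ 1| ≤ #(F.image (g₀ * ·) ∆ F) * ‖f‖ := by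
      simpa [Ψ, map_mul] using F.norm_sum_mul_left_sub_sum_le g₀ (φ := fun g => f (τ g))
        fun g => f.norm_coe_le_norm _
    have h_close : |Ψ (τ g₀) - Ψ h| ≤ #F * δ := by
      rw [← sum_sub_distrib]
      refine (abs_sum_le_sum_abs _ _).trans ?_
      simpa [Real.dist_eq] using sum_le_card_nsmul F _ δ fun g _ =>
        (hV _ _ (by simpa [mul_assoc] using hg₀)).le
    have h_le_sum : (#(F.image (g₀ * ·) ∆ F) : ℝ) ≤ ∑ g ∈ T, (#(F.image (g * ·) ∆ F) : ℝ) :=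
      single_le_sum (f := fun g => (#(F.image (g * ·) ∆ F) : ℝ)) (fun g _ => by positivity) hg₀T
    have h_triangle : |Ψ 1 - Ψ h| ≤ |Ψ (τ g₀) - Ψ 1| + |Ψ (τ g₀) - Ψ h| := by
      rw [abs_sub_comm (Ψ _) (Ψ 1)]; exact abs_sub_le _ _ _
    have := mul_le_mul_of_nonneg_left h_le_sum (norm_nonneg f)
    linarith
  calc |∑ g ∈ F, f (τ g) - #F * ∫ h, f h ∂ν| = ‖∫ h, (Ψ 1 - Ψ h) ∂ν‖ := by
        rw [integral_sub (integrable_const _) hΨ_integrable, hΨ_integral]; simp [Ψ]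
    _ ≤ _ := by
        simpa only [probReal_univ, mul_one] using norm_integral_le_of_norm_le_const (μ := ν)
          (Eventually.of_forall fun h => (Real.norm_eq_abs _).trans_le (hΨ_osc h))

variable {τ : G →* H} {F : ℕ → Finset G}

open Finset in
theorem IsFolner.tendsto_sum_div_card_integral (hF : IsFolner F) (hτ : DenseRange τ)
    (f : C(H, ℝ)) :
    Tendsto (fun n => (∑ g ∈ F n, f (τ g)) / #(F n)) atTop (𝓝 (∫ h, f h ∂ν)) := by
  classical
  refine Metric.tendsto_atTop.2 fun ε hε => ?_
  obtain ⟨V, hV, hfV⟩ := f.continuous.exists_mem_nhds_one_dist_lt (half_pos hε)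
  obtain ⟨T, hT⟩ := hτ.exists_finset_forall_exists_mul_inv_mem hV
  have h_defect : Tendsto (fun n => ‖f‖ * ∑ g ∈ T, (#((F n).image (g * ·) ∆ F n) : ℝ) / #(F n))
      atTop (𝓝 0) := by
    simpa using (tendsto_finsetSum T fun g _ => hF.2 g).const_mul ‖f‖
  obtain ⟨N, hN⟩ := (h_defect.eventually (gt_mem_nhds (half_pos hε))).exists_forall_of_atTop
  refine ⟨N, fun n hn => ?_⟩
  have hcard : (0 : ℝ) < #(F n) := by exact_mod_cast (hF.1 n).card_pos
  have h_estimate := abs_sum_sub_card_mul_integral_le ν τ f hfV hT (F n)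
  have h_small := hN n hn
  rw [← sum_div, ← mul_div_assoc, div_lt_iff₀ hcard] at h_small
  rw [Real.dist_eq, div_sub' hcard.ne', abs_div, abs_of_pos hcard, div_lt_iff₀ hcard]
  linarith

open Finset in
theorem IsFolner.limsup_card_filter_mem_le (hF : IsFolner F) (hτ : DenseRange τ) {C : Set H}
    (hC : IsClosed C) [DecidablePred (· ∈ C)] :
    limsup (fun n => (#{g ∈ F n | τ g ∈ C} : ℝ) / #(F n)) atTop ≤ ν.real C := by
  refine le_of_forall_pos_le_add fun ε hε => ?_
  obtain ⟨U, hCU, hU, hUν⟩ := C.exists_isOpen_lt_of_lt (ν C + ENNReal.ofReal ε)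
    (ENNReal.lt_add_right (measure_ne_top ν C) (by simpa using hε))
  obtain ⟨f, hf0, hf1, hf01⟩ := exists_continuous_zero_one_of_isClosed hU.isClosed_compl hC
    (disjoint_compl_left_iff_subset.2 hCU)
  have h_count (n : ℕ) :
      (#{g ∈ F n | τ g ∈ C} : ℝ) / #(F n) ≤ (∑ g ∈ F n, f (τ g)) / #(F n) := by
    gcongr
    calc (#{g ∈ F n | τ g ∈ C} : ℝ) = ∑ g ∈ F n with τ g ∈ C, f (τ g) := by
          rw [sum_congr rfl fun g hg => hf1 (mem_filter.1 hg).2]; simp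
      _ ≤ ∑ g ∈ F n, f (τ g) :=
          sum_le_sum_of_subset_of_nonneg (filter_subset _ _) fun g _ _ => (hf01 _).1
  have h_integral : ∫ h, f h ∂ν ≤ ν.real U :=
    (ENNReal.ofReal_le_iff_le_toReal (measure_ne_top ν U)).1
      (integral_le_measure (fun x _ => (hf01 x).2) fun x hx => (hf0 hx).le)
  have hU_real : ν.real U ≤ ν.real C + ε := by
    have := ENNReal.toReal_mono (by finiteness) hUν.le
    rwa [ENNReal.toReal_add (measure_ne_top ν C) ENNReal.ofReal_ne_top,
      ENNReal.toReal_ofReal hε.le] at this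
  have h_lim := hF.tendsto_sum_div_card_integral ν hτ f
  calc limsup (fun n => (#{g ∈ F n | τ g ∈ C} : ℝ) / #(F n)) atTop
      ≤ limsup (fun n => (∑ g ∈ F n, f (τ g)) / #(F n)) atTop :=
        limsup_le_limsup (.of_forall h_count)
          (isCoboundedUnder_le_of_le atTop fun n => by positivity) h_lim.isBoundedUnder_le
    _ = ∫ h, f h ∂ν := h_lim.limsup_eq
    _ ≤ ν.real C + ε := h_integral.trans hU_real

end CompactGroup

lemma modelSet_ne_modelSet_iff {G H : Type*} (τ : G → H) (A B : Set H) (g : G) :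
    modelSet τ A g ≠ modelSet τ B g ↔ τ g ∈ A ∆ B := by
  simp only [modelSet, ne_eq, decide_eq_decide, mem_symmDiff]
  tauto

open Finset in
theorem stmt_2_general {G : Type*} [Group G]
    {H : Type*} [Group H] [TopologicalSpace H] [IsTopologicalGroup H]
    [CompactSpace H] [MeasurableSpace H] [BorelSpace H]
    (ν : Measure H) [ν.IsHaarMeasure] [IsProbabilityMeasure ν]
    (τ : G →* H) (hdense : DenseRange ⇑τ)
    (F : ℕ → Finset G) (hF : IsFolner F) (A B : Set H) :
    besicovitchDist F (modelSet (⇑τ) A) (modelSet (⇑τ) B) ≤ (ν (closure (A ∆ B))).toReal := by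
  classical
  have h_mismatch (n : ℕ) : (#{g ∈ F n | modelSet τ A g ≠ modelSet τ B g} : ℝ) / #(F n) ≤
      (#{g ∈ F n | τ g ∈ closure (A ∆ B)} : ℝ) / #(F n) := by
    gcongr with g
    exact fun h => subset_closure ((modelSet_ne_modelSet_iff τ A B g).1 h)
  calc besicovitchDist F (modelSet τ A) (modelSet τ B)
      ≤ limsup (fun n => (#{g ∈ F n | τ g ∈ closure (A ∆ B)} : ℝ) / #(F n)) atTop :=
        limsup_le_limsup (.of_forall h_mismatch)
          (isCoboundedUnder_le_of_le atTop fun n => by positivity)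
          (isBoundedUnder_of ⟨1, fun n => div_le_one_of_le₀
            (mod_cast card_le_card (filter_subset _ _)) (by positivity)⟩)
    _ ≤ ν.real (closure (A ∆ B)) := hF.limsup_card_filter_mem_le ν hdense isClosed_closure

/-- The Besicovitch pseudodistance of two symbolic model sets is bounded by
`ν(closure (A ∆ B))`; in particular `Φ : A ↦ x_A` is continuous from `D̄` to `D_F`. -/
theorem stmt_2 {G : Type*} [Group G] [Countable G] [Infinite G]
    {H : Type*} [Group H] [TopologicalSpace H] [IsTopologicalGroup H]
    [CompactSpace H] [TopologicalSpace.MetrizableSpace H] [MeasurableSpace H] [BorelSpace H]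
    (ν : Measure H) [ν.IsHaarMeasure] [IsProbabilityMeasure ν]
    (τ : G →* H) (hinj : Function.Injective ⇑τ) (hdense : DenseRange ⇑τ)
    (F : ℕ → Finset G) (hF : IsFolner F) (A B : Set H) :
    besicovitchDist F (modelSet (⇑τ) A) (modelSet (⇑τ) B) ≤ (ν (closure (A ∆ B))).toReal :=
  stmt_2_general ν τ hdense F hF A B
end

section
/- Let G be a countably infinite group, H a compact metrizable topological group, and τ : G → H an injective group homomorphism with dense image. Let (Γ_n) be a decreasing sequence of finite-index normal subgroups of G such that for every neighborhood U of 1_H there exists n with τ(Γ_n) ⊆ U. If W ⊆ H satisfies ∂W ∩ τ(G) = ∅, then the symbolic model set x_W is a Toeplitz array relative to (Γ_n): for every g ∈ G there exist n ∈ ℕ and α ∈ {0,1} such that x_W(gγ) = α for all γ ∈ Γ_n. -/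
open MeasureTheory Filter Set Topology
open scoped symmDiff ENNReal

theorem eventually_mem_iff_of_notMem_frontier {X : Type*} [TopologicalSpace X] {s : Set X}
    {x : X} (hx : x ∉ frontier s) : ∀ᶠ y in 𝓝 x, (y ∈ s ↔ x ∈ s) := by
  simp only [frontier_eq_inter_compl_interior, mem_inter_iff, mem_compl_iff, not_and_or,
    not_not] at hx
  rcases hx with hx | hx
  · filter_upwards [mem_interior_iff_mem_nhds.mp hx] with y hy
    exact iff_of_true hy (interior_subset hx)
  · filter_upwards [mem_interior_iff_mem_nhds.mp hx] with y hy
    exact iff_of_false hy (interior_subset hx)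

theorem MonoidHom.exists_forall_apply_mul_of_eventually_nhds {G H : Type*} [Group G] [Monoid H]
    [TopologicalSpace H] [ContinuousMul H] (τ : G →* H) {Γ : ℕ → Subgroup G}
    (hbasis : ∀ U ∈ 𝓝 (1 : H), ∃ n, ∀ γ ∈ Γ n, τ γ ∈ U) (g : G) {P : H → Prop}
    (hP : ∀ᶠ h in 𝓝 (τ g), P h) : ∃ n, ∀ γ ∈ Γ n, P (τ (g * γ)) := by
  have hmul : Tendsto (τ g * ·) (𝓝 1) (𝓝 (τ g)) := by
    simpa using (continuous_const_mul (τ g)).tendsto 1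
  obtain ⟨n, hn⟩ := hbasis _ (hmul hP)
  exact ⟨n, fun γ hγ => by simpa using hn γ hγ⟩

theorem stmt_4_general {G : Type*} [Group G]
    {H : Type*} [Group H] [TopologicalSpace H] [IsTopologicalGroup H]
    (τ : G →* H)
    (Γ : ℕ → Subgroup G)
    (hbasis : ∀ U ∈ nhds (1 : H), ∃ n, ∀ γ ∈ Γ n, τ γ ∈ U)
    (W : Set H) (hgen : frontier W ∩ Set.range ⇑τ = ∅) :
    ∀ g : G, ∃ n : ℕ, ∃ α : Bool, ∀ γ ∈ Γ n, modelSet (⇑τ) W (g * γ) = α := by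
  intro g
  have hg : τ g ∉ frontier W := fun h => hgen.subset ⟨h, mem_range_self g⟩
  obtain ⟨n, hn⟩ := τ.exists_forall_apply_mul_of_eventually_nhds hbasis g
    (eventually_mem_iff_of_notMem_frontier hg)
  exact ⟨n, modelSet τ W g, fun γ hγ => decide_eq_decide.mpr (hn γ hγ)⟩

/-- If `W` is generic (`∂W ∩ τ(G) = ∅`) and the images `τ(Γ_n)` of a decreasing
sequence of finite-index normal subgroups get inside every neighborhood of `1_H`, then the
symbolic model set `x_W` is a Toeplitz array relative to `(Γ_n)`. -/
theorem stmt_4 {G : Type*} [Group G] [Countable G] [Infinite G]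
    {H : Type*} [Group H] [TopologicalSpace H] [IsTopologicalGroup H]
    [CompactSpace H] [TopologicalSpace.MetrizableSpace H]
    (τ : G →* H) (hinj : Function.Injective ⇑τ) (hdense : DenseRange ⇑τ)
    (Γ : ℕ → Subgroup G) (hdec : ∀ n, Γ (n + 1) ≤ Γ n)
    (hnorm : ∀ n, (Γ n).Normal) (hfi : ∀ n, (Γ n).FiniteIndex)
    (hbasis : ∀ U ∈ nhds (1 : H), ∃ n, ∀ γ ∈ Γ n, τ γ ∈ U)
    (W : Set H) (hgen : frontier W ∩ Set.range ⇑τ = ∅) :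
    ∀ g : G, ∃ n : ℕ, ∃ α : Bool, ∀ γ ∈ Γ n, modelSet (⇑τ) W (g * γ) = α :=
  stmt_4_general τ Γ hbasis W hgen
end

section
/- Let G be a countably infinite group, H a compact metrizable topological group with normalized Haar probability measure ν, and τ : G → H an injective group homomorphism with dense image. Let (Γ_n) be a decreasing sequence of finite-index normal subgroups of G such that each K_n := closure(τ(Γ_n)) is an open subgroup of H, τ^{-1}(K_n) = Γ_n, and (K_n) forms a neighborhood basis of 1_H. Let W ⊆ H be compact with W = closure(interior W) and ∂W ∩ τ(G) = ∅. Then for every choice of fundamental domains D_n of G/Γ_n, the densities #(D_n ∩ Per(x_W, Γ_n))/#D_n converge to 1 − ν(∂W) as n → ∞. In particular, the regularity constant 𝒟(x_W) equals 1 − ν(∂W), and x_W is a regular Toeplitz array if and only if ν(∂W) = 0. -/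
/-!
For a finite-index subgroup `Λ ≤ G` put `K = closure (τ Λ)`. Finitely many translates `τ d • K`
(`d` in a fundamental domain `E`) cover `τ G`, hence all of `H`; so `K` is a closed subgroup of
finite index, hence open. As `τ Λ` is dense in `K` and `W` is regular closed, `g` is a
`Λ`-periodic position of `x_W` exactly when the coset `τ g • K` lies inside `W` or misses it,
i.e. `τ g ∈ cosetConstSet K W`. Every point of `H` lies in the same number of translates
`τ d • K`, and integrating this multiplicity shows that for right-`K`-invariant `S` the
proportion of `d ∈ E` with `τ d ∈ S` is `ν S`. So the periodic density is
`ν (cosetConstSet K W) ≤ ν (∂W)ᶜ`, and since the `K n` shrink to `1`, the sets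
`cosetConstSet (K n) W` increase to `(∂W)ᶜ`.
-/

open MeasureTheory Filter Set Topology
open scoped symmDiff ENNReal

open scoped Pointwise

namespace IsFundDom

variable {G : Type*} [Group G] {Λ : Subgroup G} {E : Finset G}

lemma eq_of_inv_mul_mem (hE : IsFundDom Λ E) {d₁ d₂ : G} (h₁ : d₁ ∈ E) (h₂ : d₂ ∈ E)
    (h : d₁⁻¹ * d₂ ∈ Λ) : d₁ = d₂ :=
  (hE d₁).unique ⟨h₁, by simp⟩ ⟨h₂, h⟩

lemma exists_mem_inv_mul_mem (hE : IsFundDom Λ E) (g : G) :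
    ∃ d ∈ E, d⁻¹ * g ∈ Λ := by
  obtain ⟨d, ⟨hd, hgd⟩, -⟩ := hE g
  exact ⟨d, hd, by simpa using Λ.inv_mem hgd⟩

lemma bijOn_mk (hE : IsFundDom Λ E) : BijOn (QuotientGroup.mk : G → G ⧸ Λ) E univ := by
  refine ⟨mapsTo_univ _ _, fun d₁ h₁ d₂ h₂ h => hE.eq_of_inv_mul_mem h₁ h₂ ?_, ?_⟩
  · exact QuotientGroup.eq.mp h
  · rintro ⟨g⟩ -
    obtain ⟨d, ⟨hd, hgd⟩, -⟩ := hE g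
    exact ⟨d, hd, (QuotientGroup.eq.mpr hgd).symm⟩

lemma ncard_inter_preimage_mk (hE : IsFundDom Λ E) (A : Set (G ⧸ Λ)) :
    ((E : Set G) ∩ QuotientGroup.mk ⁻¹' A).ncard = A.ncard := by
  conv_rhs => rw [← univ_inter A, ← hE.bijOn_mk.image_eq, ← image_inter_preimage]
  exact (hE.bijOn_mk.injOn.mono inter_subset_left).ncard_image.symm

lemma ncard_inter_leftCoset (hE : IsFundDom Λ E) {M : Subgroup G} (hΛM : Λ ≤ M) (g : G) :
    ((E : Set G) ∩ g • (M : Set G)).ncard = ((E : Set G) ∩ M).ncard := by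
  set A : Set (G ⧸ Λ) := QuotientGroup.mk '' (M : Set G)
  have hA : ∀ a : G, (a : G ⧸ Λ) ∈ A ↔ a ∈ M := by
    refine fun a => ⟨?_, fun ha => mem_image_of_mem _ ha⟩
    rintro ⟨m, hm, hma⟩
    simpa using M.mul_mem hm (hΛM (QuotientGroup.eq.mp hma))
  have hgA : (E : Set G) ∩ g • (M : Set G) = (E : Set G) ∩ QuotientGroup.mk ⁻¹' (g • A) := by
    ext d
    simp only [mem_inter_iff, mem_preimage, mem_smul_set_iff_inv_smul_mem, smul_eq_mul]
    exact and_congr_right fun _ => (hA _).symm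
  have hA' : (E : Set G) ∩ M = (E : Set G) ∩ QuotientGroup.mk ⁻¹' A := by
    ext d
    exact and_congr_right fun _ => (hA d).symm
  rw [hgA, hA', hE.ncard_inter_preimage_mk, hE.ncard_inter_preimage_mk, ncard_smul_set]

end IsFundDom

section Cosets

variable {G H : Type*} [Group G] [Group H] [TopologicalSpace H] [IsTopologicalGroup H]
  {τ : G →* H} {Λ : Subgroup G} {E : Finset G} {K : Subgroup H}

lemma IsFundDom.iUnion_smul_topologicalClosure_eq_univ (hdense : DenseRange τ)
    (hE : IsFundDom Λ E) : ⋃ d ∈ E, τ d • ((Λ.map τ).topologicalClosure : Set H) = univ := by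
  have hclosed : IsClosed (⋃ d ∈ E, τ d • ((Λ.map τ).topologicalClosure : Set H)) :=
    E.finite_toSet.isClosed_biUnion fun d _ => (Λ.map τ).isClosed_topologicalClosure.smul _
  refine univ_subset_iff.mp (hdense.closure_range ▸ closure_minimal ?_ hclosed)
  rintro _ ⟨g, rfl⟩
  obtain ⟨d, hd, hdg⟩ := hE.exists_mem_inv_mul_mem g
  refine mem_biUnion hd (mem_leftCoset_iff _ |>.mpr ?_)
  rw [← map_inv, ← map_mul]
  exact (Λ.map τ).le_topologicalClosure (Subgroup.mem_map_of_mem τ hdg)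

lemma IsFundDom.isOpen_topologicalClosure_map (hdense : DenseRange τ) (hE : IsFundDom Λ E) :
    IsOpen ((Λ.map τ).topologicalClosure : Set H) := by
  set L := (Λ.map τ).topologicalClosure
  have : Finite (H ⧸ L) := by
    refine Finite.of_surjective (fun d : E => ((τ d : H) : H ⧸ L)) ?_
    rintro ⟨h⟩
    obtain ⟨d, hd, hdh⟩ := mem_iUnion₂.mp
      ((hE.iUnion_smul_topologicalClosure_eq_univ hdense).symm ▸ mem_univ h)
    exact ⟨⟨d, hd⟩, QuotientGroup.eq.mpr (mem_leftCoset_iff _ |>.mp hdh)⟩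
  have := Subgroup.finiteIndex_of_finite_quotient (H := L)
  exact L.isOpen_of_isClosed_of_finiteIndex (Λ.map τ).isClosed_topologicalClosure

lemma IsFundDom.ncard_setOf_mem_smul (hdense : DenseRange τ) (hK : IsOpen (K : Set H))
    (hΛK : Λ ≤ K.comap τ) (hE : IsFundDom Λ E) (h : H) :
    ((E : Set G) ∩ {d | h ∈ τ d • (K : Set H)}).ncard = ((E : Set G) ∩ K.comap τ).ncard := by
  obtain ⟨g, hg⟩ := hdense.exists_mem_open (hK.smul h) ⟨h, mem_leftCoset_iff h |>.mpr (by simp)⟩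
  rw [← hE.ncard_inter_leftCoset hΛK g]
  congr 1
  ext d
  simp only [mem_inter_iff, mem_ofPred_eq, mem_leftCoset_iff, SetLike.mem_coe,
    Subgroup.mem_comap, map_mul, map_inv]
  rw [mem_leftCoset_iff] at hg
  refine and_congr_right fun _ => ?_
  rw [← K.mul_mem_cancel_right hg, ← K.inv_mem_iff]
  simp [mul_assoc]

variable [MeasurableSpace H] [BorelSpace H] (ν : Measure H)

lemma IsFundDom.sum_measure_smul_inter (hdense : DenseRange τ) (hK : IsOpen (K : Set H))
    (hΛK : Λ ≤ K.comap τ) (hE : IsFundDom Λ E) (S : Set H) :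
    ∑ d ∈ E, ν (τ d • (K : Set H) ∩ S) = ((E : Set G) ∩ K.comap τ).ncard * ν S := by
  classical
  have hcount : ∀ h, ∑ d ∈ E, (τ d • (K : Set H)).indicator 1 h
      = (((E : Set G) ∩ K.comap τ).ncard : ℝ≥0∞) := by
    intro h
    simp only [indicator_apply, Pi.one_apply, Finset.sum_boole]
    rw [← hE.ncard_setOf_mem_smul hdense hK hΛK h, ← ncard_coe_finset, Finset.coe_filter]
    rfl
  calc ∑ d ∈ E, ν (τ d • (K : Set H) ∩ S)
      = ∑ d ∈ E, ∫⁻ h in S, (τ d • (K : Set H)).indicator 1 h ∂ν := by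
        refine Finset.sum_congr rfl fun d _ => ?_
        rw [lintegral_indicator_one ((hK.smul _).measurableSet), Measure.restrict_apply
          (hK.smul _).measurableSet]
    _ = ∫⁻ h in S, ∑ d ∈ E, (τ d • (K : Set H)).indicator 1 h ∂ν :=
        (lintegral_finsetSum _ fun d _ =>
          measurable_one.indicator (hK.smul _).measurableSet).symm
    _ = _ := by simp_rw [hcount, setLIntegral_const]

variable [ν.IsMulLeftInvariant]

lemma IsFundDom.measure_mul_ncard_inter_preimage (hdense : DenseRange τ)
    (hK : IsOpen (K : Set H)) (hΛK : Λ ≤ K.comap τ) (hE : IsFundDom Λ E) {S : Set H}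
    (hSK : ∀ h ∈ S, ∀ k ∈ K, h * k ∈ S) :
    ν K * ((E : Set G) ∩ τ ⁻¹' S).ncard = ((E : Set G) ∩ K.comap τ).ncard * ν S := by
  classical
  have hcoset : ∀ d, ν (τ d • (K : Set H) ∩ S) = if τ d ∈ S then ν K else 0 := by
    intro d
    split_ifs with hd
    · rw [inter_eq_left.mpr, measure_smul]
      intro x hx
      simpa using hSK _ hd _ (mem_leftCoset_iff _ |>.mp hx)
    · rw [← measure_empty (μ := ν)]
      congr 1
      refine eq_empty_of_forall_notMem fun x ⟨hxK, hxS⟩ => hd ?_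
      simpa using hSK _ hxS _ (K.inv_mem (mem_leftCoset_iff _ |>.mp hxK))
  rw [← hE.sum_measure_smul_inter ν hdense hK hΛK S]
  simp_rw [hcoset, Finset.sum_ite, Finset.sum_const_zero, add_zero, Finset.sum_const,
    nsmul_eq_mul, mul_comm (ν K)]
  rw [← ncard_coe_finset, Finset.coe_filter]
  rfl

lemma IsFundDom.ncard_inter_preimage [IsProbabilityMeasure ν] (hdense : DenseRange τ)
    (hK : IsOpen (K : Set H)) (hΛK : Λ ≤ K.comap τ) (hE : IsFundDom Λ E) {S : Set H}
    (hSK : ∀ h ∈ S, ∀ k ∈ K, h * k ∈ S) :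
    (((E : Set G) ∩ τ ⁻¹' S).ncard : ℝ≥0∞) = ν S * E.card := by
  have hS := hE.measure_mul_ncard_inter_preimage ν hdense hK hΛK hSK
  have huniv := hE.measure_mul_ncard_inter_preimage ν hdense hK hΛK (S := univ) (by simp)
  rw [preimage_univ, inter_univ, ncard_coe_finset, measure_univ, mul_one] at huniv
  have hm : ((E : Set G) ∩ K.comap τ).ncard ≠ 0 := by
    obtain ⟨d, hd, hdΛ⟩ := hE.exists_mem_inv_mul_mem 1
    refine ncard_ne_zero_of_mem (a := d) ⟨hd, hΛK (by simpa using hdΛ)⟩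
      (E.finite_toSet.subset inter_subset_left)
  have hK0 : ν K ≠ 0 := fun h => hm (by rw [h, zero_mul] at huniv; exact_mod_cast huniv.symm)
  rw [← ENNReal.mul_right_inj hK0 (measure_ne_top ν _), hS, ← huniv]
  ring

end Cosets

section CosetConst

variable {H : Type*} [Group H]

def cosetConstSet (K : Subgroup H) (W : Set H) : Set H :=
  {h | (∀ k ∈ K, h * k ∈ W) ∨ ∀ k ∈ K, h * k ∉ W}

variable {K : Subgroup H} {W : Set H}

lemma mul_mem_cosetConstSet {h k : H} (hh : h ∈ cosetConstSet K W) (hk : k ∈ K) :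
    h * k ∈ cosetConstSet K W := by
  refine hh.imp (fun hW k' hk' => ?_) (fun hW k' hk' => ?_) <;>
    simpa [mul_assoc] using hW _ (K.mul_mem hk hk')

lemma cosetConstSet_anti {K' : Subgroup H} (hKK' : K ≤ K') :
    cosetConstSet K' W ⊆ cosetConstSet K W :=
  fun _ hh => hh.imp (fun hW k hk => hW k (hKK' hk)) (fun hW k hk => hW k (hKK' hk))

variable [TopologicalSpace H] [IsTopologicalGroup H]

lemma cosetConstSet_subset_compl_frontier (hK : IsOpen (K : Set H)) :
    cosetConstSet K W ⊆ (frontier W)ᶜ := by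
  intro h hh
  have hmem : h ∈ h • (K : Set H) := mem_leftCoset_iff h |>.mpr (by simp)
  rw [compl_frontier_eq_union_interior]
  refine hh.imp (fun hW => ?_) (fun hW => ?_) <;>
    refine mem_interior.mpr ⟨h • (K : Set H), fun x hx => ?_, hK.smul h, hmem⟩ <;>
    simpa using hW _ (mem_leftCoset_iff h |>.mp hx)

lemma iUnion_cosetConstSet {ι : Type*} {K : ι → Subgroup H} (hK : ∀ i, IsOpen (K i : Set H))
    (hbasis : ∀ U ∈ 𝓝 (1 : H), ∃ i, (K i : Set H) ⊆ U) :
    ⋃ i, cosetConstSet (K i) W = (frontier W)ᶜ := by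
  refine (iUnion_subset fun i => cosetConstSet_subset_compl_frontier (hK i)).antisymm ?_
  have hsmall : ∀ h : H, ∀ V ∈ 𝓝 h, ∃ i, ∀ k ∈ K i, h * k ∈ V := by
    intro h V hV
    obtain ⟨i, hi⟩ := hbasis _
      ((continuous_const_mul h).continuousAt.preimage_mem_nhds (by simpa using hV))
    exact ⟨i, fun k hk => hi hk⟩
  intro h hh
  rw [compl_frontier_eq_union_interior] at hh
  rcases hh with hW | hW
  · obtain ⟨i, hi⟩ := hsmall h _ (isOpen_interior.mem_nhds hW)
    exact mem_iUnion.mpr ⟨i, Or.inl fun k hk => interior_subset (hi k hk)⟩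
  · obtain ⟨i, hi⟩ := hsmall h _ (isOpen_interior.mem_nhds hW)
    exact mem_iUnion.mpr ⟨i, Or.inr fun k hk => interior_subset (hi k hk)⟩

end CosetConst

section ModelSet

variable {G H : Type*} [Group G] [Group H] [TopologicalSpace H] [IsTopologicalGroup H]
  {τ : G →* H} {Λ : Subgroup G} {W : Set H}

lemma mem_perA_modelSet_true_iff (hW : IsClosed W) (g : G) :
    g ∈ perA (modelSet τ W) Λ true ↔ ∀ k ∈ (Λ.map τ).topologicalClosure, τ g * k ∈ W := by
  refine ⟨fun hg => ?_, fun hg γ hγ => ?_⟩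
  · refine MapsTo.closure_left (f := (τ g * ·)) ?_ (continuous_const_mul _) hW
    rintro _ ⟨γ, hγ, rfl⟩
    simpa [modelSet] using hg γ hγ
  · simpa [modelSet] using hg _ ((Λ.map τ).le_topologicalClosure (Subgroup.mem_map_of_mem τ hγ))

lemma mem_perA_modelSet_false_iff (hK : IsOpen ((Λ.map τ).topologicalClosure : Set H))
    (hW : W ⊆ closure (interior W)) (g : G) :
    g ∈ perA (modelSet τ W) Λ false ↔ ∀ k ∈ (Λ.map τ).topologicalClosure, τ g * k ∉ W := by
  refine ⟨fun hg => ?_, fun hg γ hγ => ?_⟩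
  · have hKint : ((Λ.map τ).topologicalClosure : Set H) ∩ (τ g * ·) ⁻¹' interior W = ∅ := by
      rw [Subgroup.topologicalClosure_coe, ← not_nonempty_iff_eq_empty,
        closure_inter_open_nonempty_iff (isOpen_interior.preimage (continuous_const_mul _))]
      rintro ⟨_, ⟨γ, hγ, rfl⟩, hγW⟩
      have := hg γ hγ
      simp only [modelSet, decide_eq_false_iff_not, map_mul] at this
      exact this (interior_subset hγW)
    intro k hk hkW
    have : (closure (interior W) ∩ τ g • ((Λ.map τ).topologicalClosure : Set H)).Nonempty :=
      ⟨τ g * k, hW hkW, smul_mem_smul_set hk⟩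
    obtain ⟨_, hx, k', hk', rfl⟩ :=
      (closure_inter_open_nonempty_iff (hK.smul _)).mp this
    exact hKint.subset ⟨hk', hx⟩
  · simpa [modelSet] using hg _ ((Λ.map τ).le_topologicalClosure (Subgroup.mem_map_of_mem τ hγ))

lemma mem_perSet_modelSet_iff (hK : IsOpen ((Λ.map τ).topologicalClosure : Set H))
    (hW : W = closure (interior W)) (g : G) :
    g ∈ perSet (modelSet τ W) Λ ↔ τ g ∈ cosetConstSet (Λ.map τ).topologicalClosure W := by
  rw [perSet, mem_union, mem_perA_modelSet_false_iff hK hW.subset,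
    mem_perA_modelSet_true_iff (hW ▸ isClosed_closure), or_comm]
  rfl

end ModelSet

section ModelSetDensity

variable {G H : Type*} [Group G] [Group H] [TopologicalSpace H] [IsTopologicalGroup H]
  [MeasurableSpace H] [BorelSpace H] (ν : Measure H) [IsProbabilityMeasure ν]
  [ν.IsMulLeftInvariant] {τ : G →* H} {Λ : Subgroup G} {E : Finset G} {W : Set H}

lemma IsFundDom.perDensity_modelSet (hdense : DenseRange τ) (hE : IsFundDom Λ E)
    (hW : W = closure (interior W)) :
    perDensity (modelSet τ W) Λ E
      = (ν (cosetConstSet (Λ.map τ).topologicalClosure W)).toReal := by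
  have hK := hE.isOpen_topologicalClosure_map hdense
  have hPer : (E : Set G) ∩ perSet (modelSet τ W) Λ
      = (E : Set G) ∩ τ ⁻¹' cosetConstSet (Λ.map τ).topologicalClosure W := by
    ext g
    exact and_congr_right fun _ => mem_perSet_modelSet_iff hK hW g
  have hcount := congrArg ENNReal.toReal <| hE.ncard_inter_preimage ν hdense hK
    (Subgroup.map_le_iff_le_comap.mp (Λ.map τ).le_topologicalClosure)
    (S := cosetConstSet _ W) fun _ hh _ hk => mul_mem_cosetConstSet hh hk
  have hE0 : (E.card : ℝ) ≠ 0 := by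
    obtain ⟨d, hd, -⟩ := hE.exists_mem_inv_mul_mem 1
    exact Nat.cast_ne_zero.mpr (Finset.card_ne_zero_of_mem hd)
  rw [ENNReal.toReal_natCast, ENNReal.toReal_mul, ENNReal.toReal_natCast] at hcount
  rw [perDensity, hPer, hcount, mul_div_cancel_right₀ _ hE0]

lemma IsFundDom.perDensity_modelSet_le (hdense : DenseRange τ) (hE : IsFundDom Λ E)
    (hW : W = closure (interior W)) :
    perDensity (modelSet τ W) Λ E ≤ 1 - (ν (frontier W)).toReal := by
  rw [hE.perDensity_modelSet ν hdense hW]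
  exact (measureReal_mono (cosetConstSet_subset_compl_frontier
    (hE.isOpen_topologicalClosure_map hdense))).trans_eq
    (probReal_compl_eq_one_sub isClosed_frontier.measurableSet)

end ModelSetDensity

lemma regConst_eq_of_tendsto {G : Type*} [Group G] {x : G → Bool} {c : ℝ}
    (hle : ∀ (Λ : Subgroup G) (E : Finset G), IsFundDom Λ E → perDensity x Λ E ≤ c)
    {Γ : ℕ → Subgroup G} {D : ℕ → Finset G} (hfi : ∀ n, (Γ n).FiniteIndex)
    (hD : ∀ n, IsFundDom (Γ n) (D n))
    (hlim : Tendsto (fun n => perDensity x (Γ n) (D n)) atTop (𝓝 c)) :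
    regConst x = c := by
  have hub : c ∈ upperBounds {r : ℝ | ∃ (Λ : Subgroup G) (E : Finset G),
      Λ.FiniteIndex ∧ IsFundDom Λ E ∧ r = perDensity x Λ E} := by
    rintro _ ⟨Λ, E, -, hE, rfl⟩
    exact hle Λ E hE
  refine le_antisymm (csSup_le ⟨_, Γ 0, D 0, hfi 0, hD 0, rfl⟩ hub) ?_
  exact le_of_tendsto' hlim fun n => le_csSup ⟨c, hub⟩ ⟨Γ n, D n, hfi n, hD n, rfl⟩

theorem stmt_5_general {G : Type*} [Group G]
    {H : Type*} [Group H] [TopologicalSpace H] [IsTopologicalGroup H]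
    [MeasurableSpace H] [BorelSpace H]
    (ν : Measure H) [ν.IsHaarMeasure] [IsProbabilityMeasure ν]
    (τ : G →* H) (hdense : DenseRange ⇑τ)
    (Γ : ℕ → Subgroup G) (hdec : ∀ n, Γ (n + 1) ≤ Γ n)
    (hfi : ∀ n, (Γ n).FiniteIndex)
    (hbasis : ∀ U ∈ nhds (1 : H), ∃ n, closure (⇑τ '' (Γ n : Set G)) ⊆ U)
    (W : Set H) (hWp : W = closure (interior W))
    (D : ℕ → Finset G) (hD : ∀ n, IsFundDom (Γ n) (D n)) :
    Filter.Tendsto (fun n => perDensity (modelSet (⇑τ) W) (Γ n) (D n)) Filter.atTop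
        (nhds (1 - (ν (frontier W)).toReal)) ∧
      regConst (modelSet (⇑τ) W) = 1 - (ν (frontier W)).toReal ∧
      (regConst (modelSet (⇑τ) W) = 1 ↔ ν (frontier W) = 0) := by
  set K : ℕ → Subgroup H := fun n => ((Γ n).map τ).topologicalClosure
  have hK : ∀ n, IsOpen (K n : Set H) := fun n => (hD n).isOpen_topologicalClosure_map hdense
  have hmono : Monotone fun n => cosetConstSet (K n) W := monotone_nat_of_le_succ fun n =>
    cosetConstSet_anti (Subgroup.topologicalClosure_mono (Subgroup.map_mono (hdec n)))
  have hlim : Tendsto (fun n => perDensity (modelSet τ W) (Γ n) (D n)) atTop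
      (𝓝 (1 - (ν (frontier W)).toReal)) := by
    have hcompl : (ν (frontier W)ᶜ).toReal = 1 - (ν (frontier W)).toReal :=
      probReal_compl_eq_one_sub isClosed_frontier.measurableSet
    simp_rw [fun n => (hD n).perDensity_modelSet ν hdense hWp]
    rw [← hcompl, ← iUnion_cosetConstSet hK hbasis]
    exact (ENNReal.tendsto_toReal (measure_ne_top _ _)).comp (tendsto_measure_iUnion_atTop hmono)
  have hreg := regConst_eq_of_tendsto (fun Λ E hE => hE.perDensity_modelSet_le ν hdense hWp)
    hfi hD hlim
  refine ⟨hlim, hreg, ?_⟩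
  rw [hreg, sub_eq_self, ENNReal.toReal_eq_zero_iff]
  simp [measure_ne_top]

/-- For a proper generic window `W` relative to a sequence `(Γ_n)` whose closures
`K_n = closure(τ(Γ_n))` are open subgroups forming a neighborhood basis of `1_H` with
`τ⁻¹(K_n) = Γ_n`, the periodic densities of `x_W` converge to `1 - ν(∂W)`, and the regularity
constant of `x_W` equals `1 - ν(∂W)`. -/
theorem stmt_5 {G : Type*} [Group G] [Countable G] [Infinite G]
    {H : Type*} [Group H] [TopologicalSpace H] [IsTopologicalGroup H]
    [CompactSpace H] [TopologicalSpace.MetrizableSpace H] [MeasurableSpace H] [BorelSpace H]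
    (ν : Measure H) [ν.IsHaarMeasure] [IsProbabilityMeasure ν]
    (τ : G →* H) (hinj : Function.Injective ⇑τ) (hdense : DenseRange ⇑τ)
    (Γ : ℕ → Subgroup G) (hdec : ∀ n, Γ (n + 1) ≤ Γ n)
    (hnorm : ∀ n, (Γ n).Normal) (hfi : ∀ n, (Γ n).FiniteIndex)
    (hopen : ∀ n, IsOpen (closure (⇑τ '' (Γ n : Set G))))
    (hpre : ∀ n, (⇑τ) ⁻¹' closure (⇑τ '' (Γ n : Set G)) = (Γ n : Set G))
    (hbasis : ∀ U ∈ nhds (1 : H), ∃ n, closure (⇑τ '' (Γ n : Set G)) ⊆ U)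
    (W : Set H) (hWc : IsCompact W) (hWp : W = closure (interior W))
    (hgen : frontier W ∩ Set.range ⇑τ = ∅)
    (D : ℕ → Finset G) (hD : ∀ n, IsFundDom (Γ n) (D n)) :
    Filter.Tendsto (fun n => perDensity (modelSet (⇑τ) W) (Γ n) (D n)) Filter.atTop
        (nhds (1 - (ν (frontier W)).toReal)) ∧
      regConst (modelSet (⇑τ) W) = 1 - (ν (frontier W)).toReal ∧
      (regConst (modelSet (⇑τ) W) = 1 ↔ ν (frontier W) = 0) :=
  stmt_5_general ν τ hdense Γ hdec hfi hbasis W hWp D hD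
end

section
/- Let G be a group, x : G → {0,1}, and Γ a finite-index normal subgroup of G with Per(x,Γ) ≠ ∅. Then there exists a subgroup Γ̃ of G with Γ ⊆ Γ̃ such that Per(x,Γ̃,α) = Per(x,Γ,α) for each α ∈ {0,1}, and Γ̃ is an essential period of x: for every g ∈ G, if Per(x,Γ̃,α) ⊆ Per(g·x, Γ̃, α) for both α ∈ {0,1}, then g ∈ Γ̃. In particular, #(E ∩ Per(x,Γ̃))/#E = #(E′ ∩ Per(x,Γ))/#E′ for fundamental domains E of G/Γ̃ and E′ of G/Γ. -/
open MeasureTheory Filter Set Topology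
open scoped symmDiff ENNReal

section Aux

lemma fundDom_count {G : Type*} [Group G] (Γ : Subgroup G) (E1 E2 : Finset G)
    (h1 : IsFundDom Γ E1) (h2 : IsFundDom Γ E2) (S : Set G)
    (hS : ∀ g ∈ S, ∀ γ ∈ Γ, g * γ ∈ S) :
    ((E1 : Set G) ∩ S).ncard = ((E2 : Set G) ∩ S).ncard ∧ E1.card = E2.card := by
  classical
  set φ : G → G := fun d => (h2 d).exists.choose with hφ
  have spec : ∀ d : G, φ d ∈ E2 ∧ d⁻¹ * φ d ∈ Γ := fun d => (h2 d).exists.choose_spec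
  have uniq : ∀ d y : G, y ∈ E2 → d⁻¹ * y ∈ Γ → y = φ d :=
    fun d y hy hyΓ => (h2 d).unique ⟨hy, hyΓ⟩ (spec d)
  have hScl : ∀ g γ : G, γ ∈ Γ → (g ∈ S ↔ g * γ ∈ S) := by
    intro g γ hγ
    constructor
    · exact fun h => hS g h γ hγ
    · intro h
      have := hS (g * γ) h γ⁻¹ (inv_mem hγ)
      simpa using this
  have hinj : Set.InjOn φ (E1 : Set G) := by
    intro d1 hd1 d2 hd2 heq
    have m1 := (spec d1).2
    have m2 := (spec d2).2
    rw [← heq] at m2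
    have : d1⁻¹ * d2 ∈ Γ := by
      have := mul_mem m1 (inv_mem m2)
      simpa [mul_assoc] using this
    exact (h1 d1).unique ⟨hd1, by simp [one_mem]⟩ ⟨hd2, this⟩
  have hsurj : ∀ y ∈ E2, ∃ d ∈ E1, φ d = y := by
    intro y hy
    obtain ⟨d, ⟨hdE, hdΓ⟩, -⟩ := h1 y
    refine ⟨d, hdE, ?_⟩
    have : d⁻¹ * y ∈ Γ := by
      have := inv_mem hdΓ
      simpa using this
    exact (uniq d y hy this).symm
  have hmemS : ∀ d : G, d ∈ S ↔ φ d ∈ S := by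
    intro d
    have := hScl d (d⁻¹ * φ d) (spec d).2
    simpa using this
  have hbij1 : Set.BijOn φ (E1 : Set G) (E2 : Set G) := by
    refine ⟨fun d hd => (spec d).1, hinj, fun y hy => ?_⟩
    obtain ⟨d, hd, hdy⟩ := hsurj y hy
    exact ⟨d, hd, hdy⟩
  have hbij2 : Set.BijOn φ ((E1 : Set G) ∩ S) ((E2 : Set G) ∩ S) := by
    refine ⟨fun d hd => ⟨(spec d).1, (hmemS d).1 hd.2⟩,
      hinj.mono Set.inter_subset_left, fun y hy => ?_⟩
    obtain ⟨d, hd, hdy⟩ := hsurj y hy.1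
    exact ⟨d, ⟨hd, (hmemS d).2 (hdy ▸ hy.2)⟩, hdy⟩
  constructor
  · rw [← hbij2.image_eq, Set.ncard_image_of_injOn hbij2.injOn]
  · have : ((E1 : Set G)).ncard = ((E2 : Set G)).ncard := by
      rw [← hbij1.image_eq, Set.ncard_image_of_injOn hbij1.injOn]
    simpa [Set.ncard_coe_finset] using this

lemma pigeon {G : Type*} [Group G] (Γ : Subgroup G) [Γ.Normal] [Γ.FiniteIndex] (P : Set G)
    (hP : ∀ k ∈ P, ∀ γ ∈ Γ, k * γ ∈ P) (g : G) (h : ∀ k ∈ P, k * g ∈ P) :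
    ∀ k ∈ P, k * g⁻¹ ∈ P := by
  classical
  have hwd : ∀ a b : G, (QuotientGroup.leftRel Γ) a b →
      (QuotientGroup.leftRel Γ) (a * g) (b * g) := by
    intro a b hab
    rw [QuotientGroup.leftRel_apply] at hab ⊢
    have : g⁻¹ * (a⁻¹ * b) * g⁻¹⁻¹ ∈ Γ := Subgroup.Normal.conj_mem ‹Γ.Normal› _ hab g⁻¹
    convert this using 1
    group
  set f : G ⧸ Γ → G ⧸ Γ := Quotient.map' (fun a => a * g) hwd with hf
  have hfmk : ∀ a : G, f (QuotientGroup.mk a) = QuotientGroup.mk (a * g) := fun a => rfl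
  have hfinj : Function.Injective f := by
    intro q1 q2
    induction q1 using QuotientGroup.induction_on with | H a =>
    induction q2 using QuotientGroup.induction_on with | H b =>
    intro hq
    rw [hfmk, hfmk, QuotientGroup.eq] at hq
    rw [QuotientGroup.eq]
    have : g * ((a * g)⁻¹ * (b * g)) * g⁻¹ ∈ Γ := Subgroup.Normal.conj_mem ‹Γ.Normal› _ hq g
    convert this using 1
    group
  set T : Set (G ⧸ Γ) := QuotientGroup.mk '' P with hT
  have hsub : f '' T ⊆ T := by
    rintro - ⟨-, ⟨k, hk, rfl⟩, rfl⟩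
    exact ⟨k * g, h k hk, (hfmk k).symm⟩
  have heq : f '' T = T := by
    apply Set.eq_of_subset_of_ncard_le hsub
    rw [Set.ncard_image_of_injective _ hfinj]
  intro k hk
  have : QuotientGroup.mk k ∈ f '' T := heq.symm ▸ (⟨k, hk, rfl⟩ : QuotientGroup.mk k ∈ T)
  obtain ⟨-, ⟨l, hl, rfl⟩, hlk⟩ := this
  rw [hfmk, QuotientGroup.eq] at hlk
  have hγ : g * ((l * g)⁻¹ * k) * g⁻¹ ∈ Γ := Subgroup.Normal.conj_mem ‹Γ.Normal› _ hlk g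
  have := hP l hl _ hγ
  convert this using 1
  group

end Aux

/-- Every finite-index normal period `Γ` of `x` is contained in an essential period
with the same sets of periodic positions; in particular the corresponding densities agree. -/

theorem stmt_6 {G : Type*} [Group G] (x : G → Bool) (Γ : Subgroup G)
    [Γ.Normal] [Γ.FiniteIndex] (hne : (perSet x Γ).Nonempty) :
    ∃ Γt : Subgroup G, Γ ≤ Γt ∧
      (∀ α : Bool, perA x Γt α = perA x Γ α) ∧
      (∀ g : G, (∀ α : Bool, perA x Γt α ⊆ perA (fun h => x (h * g)) Γt α) → g ∈ Γt) ∧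
      (∀ E E' : Finset G, IsFundDom Γt E → IsFundDom Γ E' →
        perDensity x Γt E = perDensity x Γ E') := by
  classical
  have hPmul : ∀ (α : Bool), ∀ k ∈ perA x Γ α, ∀ γ ∈ Γ, k * γ ∈ perA x Γ α := by
    intro α k hk γ hγ γ' hγ'
    have := hk (γ * γ') (mul_mem hγ hγ')
    simpa [mul_assoc] using this
  set Γt : Subgroup G :=
    { carrier := {g | ∀ (α : Bool), ∀ k ∈ perA x Γ α, k * g ∈ perA x Γ α}
      one_mem' := by intro α k hk; simpa using hk
      mul_mem' := by
        intro a b ha hb α k hk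
        have := hb α _ (ha α k hk)
        simpa [mul_assoc] using this
      inv_mem' := by
        intro a ha α k hk
        exact pigeon Γ _ (hPmul α) a (ha α) k hk } with hΓt
  have hmemΓt : ∀ g : G, g ∈ Γt ↔ ∀ (α : Bool), ∀ k ∈ perA x Γ α, k * g ∈ perA x Γ α :=
    fun g => Iff.rfl
  have hle : Γ ≤ Γt := fun γ hγ => (hmemΓt γ).2 (fun α k hk => hPmul α k hk γ hγ)
  have hperA : ∀ α : Bool, perA x Γt α = perA x Γ α := by
    intro α
    apply Set.Subset.antisymm
    · intro k hk γ hγ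
      exact hk γ (hle hγ)
    · intro k hk g hg
      have h1 := (hmemΓt g).1 hg α k hk 1 (one_mem Γ)
      simpa using h1
  refine ⟨Γt, hle, hperA, ?_, ?_⟩
  · -- essential period
    intro g hgall
    rw [hmemΓt]
    intro α k hk
    have hk' : k ∈ perA x Γt α := (hperA α).symm ▸ hk
    have h2 := hgall α hk'
    intro γ' hγ'
    have hc : g * γ' * g⁻¹ ∈ Γt := hle (Subgroup.Normal.conj_mem ‹Γ.Normal› _ hγ' g)
    have h3 := h2 (g * γ' * g⁻¹) hc
    have harg : k * g * γ' = k * (g * γ' * g⁻¹) * g := by group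
    rw [harg]
    exact h3
  · -- densities
    intro E E' hE hE'
    set S : Set G := perSet x Γ with hS
    have hSsat : ∀ g ∈ S, ∀ t ∈ Γt, g * t ∈ S := by
      intro g hg t ht
      rcases hg with hg | hg
      · exact Or.inl ((hmemΓt t).1 ht false g hg)
      · exact Or.inr ((hmemΓt t).1 ht true g hg)
    have hSsatΓ : ∀ g ∈ S, ∀ γ ∈ Γ, g * γ ∈ S := fun g hg γ hγ => hSsat g hg γ (hle hγ)
    have hperSet : perSet x Γt = S := by
      unfold perSet
      rw [hperA, hperA]
      rfl
    -- transversal of Γ in Γt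
    haveI : Finite (Γt ⧸ Γ.subgroupOf Γt) := inferInstance
    haveI := Fintype.ofFinite (Γt ⧸ Γ.subgroupOf Γt)
    set F : Finset G :=
      Finset.image (fun q : Γt ⧸ Γ.subgroupOf Γt => ((Quotient.out q : Γt) : G))
        Finset.univ with hF
    have hFsub : ∀ f ∈ F, f ∈ Γt := by
      intro f hf
      obtain ⟨q, -, rfl⟩ := Finset.mem_image.mp hf
      exact (Quotient.out q).2
    have hFfund : ∀ t : G, t ∈ Γt → ∃! f, f ∈ F ∧ t⁻¹ * f ∈ Γ := by
      intro t ht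
      set q : Γt ⧸ Γ.subgroupOf Γt := QuotientGroup.mk (⟨t, ht⟩ : Γt) with hq
      refine ⟨((Quotient.out q : Γt) : G),
        ⟨Finset.mem_image_of_mem _ (Finset.mem_univ q), ?_⟩, ?_⟩
      · have h1 : (⟨t, ht⟩ : Γt)⁻¹ * Quotient.out q ∈ Γ.subgroupOf Γt := by
          rw [← QuotientGroup.eq, QuotientGroup.out_eq']
        simpa [Subgroup.mem_subgroupOf] using h1
      · rintro f' ⟨hf'F, hf'Γ⟩
        obtain ⟨q', -, rfl⟩ := Finset.mem_image.mp hf'F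
        suffices hq' : q' = q by rw [hq']
        have h1 : (QuotientGroup.mk (⟨t, ht⟩ : Γt) : Γt ⧸ Γ.subgroupOf Γt)
            = QuotientGroup.mk (Quotient.out q') := by
          rw [QuotientGroup.eq, Subgroup.mem_subgroupOf]
          simpa using hf'Γ
        rw [QuotientGroup.out_eq'] at h1
        rw [← h1, hq]
    have hFne : F.Nonempty :=
      ⟨_, Finset.mem_image_of_mem _ (Finset.mem_univ (QuotientGroup.mk 1))⟩
    -- the product fundamental domain
    set D : Finset G := Finset.image (fun p : G × G => p.1 * p.2) (E ×ˢ F) with hD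
    have hinjD : Set.InjOn (fun p : G × G => p.1 * p.2) ↑(E ×ˢ F) := by
      intro p hp p' hp' heq
      rw [Finset.mem_coe, Finset.mem_product] at hp hp'
      simp only at heq
      have h12 : p.1⁻¹ * p'.1 ∈ Γt := by
        have hval : p.1⁻¹ * p'.1 = p.2 * p'.2⁻¹ := by
          have h' : p.1 * p.2 * p'.2⁻¹ = p'.1 := by rw [heq]; group
          rw [← h']; group
        rw [hval]
        exact mul_mem (hFsub _ hp.2) (inv_mem (hFsub _ hp'.2))
      have h1 : p.1 = p'.1 := (hE p.1).unique ⟨hp.1, by simp [one_mem]⟩ ⟨hp'.1, h12⟩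
      have h2 : p.2 = p'.2 := by
        apply mul_left_cancel (a := p.1)
        rw [heq, h1]
      exact Prod.ext h1 h2
    have hDfund : IsFundDom Γ D := by
      intro g
      obtain ⟨e, ⟨heE, heΓt⟩, heu⟩ := hE g
      have htmem : e⁻¹ * g ∈ Γt := by
        have := inv_mem heΓt
        simpa using this
      obtain ⟨f, ⟨hfF, hfΓ⟩, hfu⟩ := hFfund (e⁻¹ * g) htmem
      refine ⟨e * f,
        ⟨Finset.mem_image.mpr ⟨(e, f), Finset.mem_product.mpr ⟨heE, hfF⟩, rfl⟩, ?_⟩, ?_⟩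
      · have := hfΓ
        convert this using 1
        group
      · rintro d ⟨hdD, hdΓ⟩
        obtain ⟨⟨e', f'⟩, hmem, rfl⟩ := Finset.mem_image.mp hdD
        rw [Finset.mem_product] at hmem
        simp only at hdΓ ⊢
        have he' : e' = e := by
          apply heu
          refine ⟨hmem.1, ?_⟩
          have h1 : g⁻¹ * (e' * f') ∈ Γt := hle hdΓ
          have h2 : f' ∈ Γt := hFsub _ hmem.2
          have hval : g⁻¹ * e' = (g⁻¹ * (e' * f')) * f'⁻¹ := by group
          rw [hval]
          exact mul_mem h1 (inv_mem h2)
        subst he'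
        have hf' : f' = f := by
          apply hfu
          refine ⟨hmem.2, ?_⟩
          convert hdΓ using 1
          group
        rw [hf']
    -- counting
    set ES : Finset G := E.filter (fun e => e ∈ S) with hES
    have hESset : (E : Set G) ∩ S = ↑ES := by
      ext a
      simp [hES, Finset.mem_filter]
    have hDS : (D : Set G) ∩ S = ↑(Finset.image (fun p : G × G => p.1 * p.2) (ES ×ˢ F)) := by
      ext d
      constructor
      · rintro ⟨hdD, hdS⟩
        rw [Finset.mem_coe, Finset.mem_image] at hdD
        obtain ⟨⟨e, f⟩, hmem, rfl⟩ := hdD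
        rw [Finset.mem_product] at hmem
        rw [Finset.mem_coe, Finset.mem_image]
        refine ⟨(e, f), Finset.mem_product.mpr ⟨Finset.mem_filter.mpr ⟨hmem.1, ?_⟩, hmem.2⟩, rfl⟩
        have := hSsat (e * f) hdS f⁻¹ (inv_mem (hFsub _ hmem.2))
        simpa [mul_assoc] using this
      · intro hd
        rw [Finset.mem_coe, Finset.mem_image] at hd
        obtain ⟨⟨e, f⟩, hmem, rfl⟩ := hd
        rw [Finset.mem_product, Finset.mem_filter] at hmem
        constructor
        · rw [Finset.mem_coe, Finset.mem_image]
          exact ⟨(e, f), Finset.mem_product.mpr ⟨hmem.1.1, hmem.2⟩, rfl⟩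
        · exact hSsat e hmem.1.2 f (hFsub _ hmem.2)
    have hprodsub : ((ES ×ˢ F : Finset (G × G)) : Set (G × G)) ⊆ ↑(E ×ˢ F) := by
      intro p hp
      rw [Finset.mem_coe, Finset.mem_product] at hp ⊢
      exact ⟨Finset.filter_subset _ _ hp.1, hp.2⟩
    have hDScard : ((D : Set G) ∩ S).ncard = ES.card * F.card := by
      rw [hDS, Set.ncard_coe_finset, Finset.card_image_of_injOn (hinjD.mono hprodsub),
        Finset.card_product]
    have hDcard : D.card = E.card * F.card := by
      rw [hD, Finset.card_image_of_injOn hinjD, Finset.card_product]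
    obtain ⟨hc1, hc2⟩ := fundDom_count Γ E' D hE' hDfund S hSsatΓ
    have hFpos : (F.card : ℝ) ≠ 0 := by
      exact_mod_cast Finset.card_ne_zero_of_mem hFne.choose_spec
    have hEScount : ((E : Set G) ∩ perSet x Γt).ncard = ES.card := by
      rw [hperSet, hESset, Set.ncard_coe_finset]
    unfold perDensity
    rw [hEScount, ← hS, hc1, hc2, hDScard, hDcard]
    push_cast
    rw [mul_div_mul_right _ _ hFpos]
end

section
/- Let G be a countable group, (Γ_n) a decreasing sequence of finite-index normal subgroups of G, and x : G → {0,1} an array relative to (Γ_n), i.e. G = ⋃_n Per(x,Γ_n). For each n choose a fundamental domain E_n of G/Γ_n and set D(x,Γ_n) = #(E_n ∩ Per(x,Γ_n))/#E_n (this value is independent of the choice of E_n). Then the sequence (D(x,Γ_n)) is nondecreasing, its limit L exists, and L equals the regularity constant 𝒟(x) = sup{#(E ∩ Per(x,Γ))/#E : Γ a finite-index subgroup of G, E a fundamental domain of G/Γ}. -/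
open MeasureTheory Filter Set Topology
open scoped symmDiff ENNReal

/-! `D(x, Γ)` only depends on the image of `Per(x, Γ)` in the finite quotient `G ⧸ Γ`, where
`Per(x, Γ)` is a union of cosets. Passing to a smaller subgroup does not change the density of a
fixed union of cosets, while `Per(x, Γ)` can only grow; this gives monotonicity.
For a finite-index `Λ`, the subgroups `Λ ⊔ Γₙ = Λ Γₙ` decrease and have index at most `[G : Λ]`,
so they stabilise at some `H`. Every position is `Γₘ`-periodic for large `m`, and `H = Λ Γₘ`, so
the value of `x` at a `Λ`-periodic position is constant on its `H`-coset. Thus `Per(x, Λ) = Per(x, H)`, hence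
`D(x, Λ) = D(x, H) ≤ D(x, Γₙ)` for large `n`, and the increasing limit is `𝒟(x)`. -/

open Pointwise

section PeriodicDensity

variable {G : Type*} [Group G]

lemma mem_perSet {x : G → Bool} {Γ : Subgroup G} {g : G} :
    g ∈ perSet x Γ ↔ ∃ α, g ∈ perA x Γ α :=
  (Bool.exists_bool (p := fun α => g ∈ perA x Γ α)).symm

lemma perA_anti (x : G → Bool) {Γ' Γ : Subgroup G} (h : Γ' ≤ Γ) (α : Bool) :
    perA x Γ α ⊆ perA x Γ' α :=
  fun _ hg γ hγ => hg γ (h hγ)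

lemma perSet_anti (x : G → Bool) {Γ' Γ : Subgroup G} (h : Γ' ≤ Γ) :
    perSet x Γ ⊆ perSet x Γ' :=
  union_subset_union (perA_anti x h false) (perA_anti x h true)

lemma perA_mul {x : G → Bool} {Γ : Subgroup G} {α : Bool} {g γ : G}
    (hg : g ∈ perA x Γ α) (hγ : γ ∈ Γ) : g * γ ∈ perA x Γ α := fun γ' hγ' => by
  rw [mul_assoc]
  exact hg _ (mul_mem hγ hγ')

lemma perSet_mul {x : G → Bool} {Γ : Subgroup G} {g γ : G}
    (hg : g ∈ perSet x Γ) (hγ : γ ∈ Γ) : g * γ ∈ perSet x Γ :=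
  Or.imp (perA_mul · hγ) (perA_mul · hγ) hg

lemma perA_subset_perA_of_exists_normal {x : G → Bool} {Λ H : Subgroup G}
    (hH : ∀ g, ∃ K : Subgroup G, K.Normal ∧ H ≤ Λ ⊔ K ∧ g ∈ perSet x K) (α : Bool) :
    perA x Λ α ⊆ perA x H α := by
  intro g hg y hy
  obtain ⟨K, hK, hHK, hgy⟩ := hH (g * y)
  obtain ⟨β, hβ⟩ := mem_perSet.mp hgy
  obtain ⟨l, hl, k, hk, rfl⟩ : y ∈ (Λ : Set G) * K := by
    rw [← Subgroup.mul_normal]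
    exact hHK hy
  calc x (g * (l * k)) = β := by simpa using hβ 1 (one_mem K)
    _ = x (g * l) := by simpa [mul_assoc] using (hβ k⁻¹ (inv_mem hk)).symm
    _ = α := hg l hl

lemma perSet_eq_of_le_of_exists_normal {x : G → Bool} {Λ H : Subgroup G} (hΛH : Λ ≤ H)
    (hH : ∀ g, ∃ K : Subgroup G, K.Normal ∧ H ≤ Λ ⊔ K ∧ g ∈ perSet x K) :
    perSet x H = perSet x Λ :=
  (perSet_anti x hΛH).antisymm <| union_subset_union
    (perA_subset_perA_of_exists_normal hH false) (perA_subset_perA_of_exists_normal hH true)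

lemma mk_mem_image_mk_iff {Γ : Subgroup G} {S : Set G} (hS : ∀ g ∈ S, ∀ γ ∈ Γ, g * γ ∈ S)
    {g : G} : (g : G ⧸ Γ) ∈ ((↑) '' S : Set (G ⧸ Γ)) ↔ g ∈ S :=
  ⟨fun ⟨p, hp, hpg⟩ => by simpa using hS p hp _ (QuotientGroup.eq.mp hpg), fun h => ⟨g, h, rfl⟩⟩

lemma preimage_image_mk_eq {Γ : Subgroup G} {S : Set G} (hS : ∀ g ∈ S, ∀ γ ∈ Γ, g * γ ∈ S) :
    (↑) ⁻¹' ((↑) '' S : Set (G ⧸ Γ)) = S :=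
  ext fun _ => mk_mem_image_mk_iff hS

lemma ncard_image_mk_of_le {Γ' Γ : Subgroup G} (h : Γ' ≤ Γ) {S : Set G}
    (hS : ∀ g ∈ S, ∀ γ ∈ Γ, g * γ ∈ S) :
    ((↑) '' S : Set (G ⧸ Γ')).ncard = ((↑) '' S : Set (G ⧸ Γ)).ncard * Γ'.relIndex Γ := by
  set e := Subgroup.quotientEquivProdOfLE h
  have hpre : ((↑) '' S : Set (G ⧸ Γ')) = e ⁻¹' (((↑) '' S : Set (G ⧸ Γ)) ×ˢ univ) := by
    ext z
    induction z using QuotientGroup.induction_on with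
    | H g =>
      simp [e, mk_mem_image_mk_iff hS, mk_mem_image_mk_iff fun g hg γ hγ => hS g hg γ (h hγ)]
  rw [hpre, ← e.image_symm_eq_preimage, ncard_image_of_injective _ e.symm.injective, ncard_prod,
    ncard_univ]
  rfl

noncomputable def cosetDensity (Γ : Subgroup G) (S : Set G) : ℝ :=
  (((↑) '' S : Set (G ⧸ Γ)).ncard : ℝ) / Γ.index

lemma cosetDensity_eq_of_le {Γ' Γ : Subgroup G} (h : Γ' ≤ Γ) [Γ'.FiniteIndex] {S : Set G}
    (hS : ∀ g ∈ S, ∀ γ ∈ Γ, g * γ ∈ S) : cosetDensity Γ' S = cosetDensity Γ S := by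
  have hr : (Γ'.relIndex Γ : ℝ) ≠ 0 := Nat.cast_ne_zero.mpr
    (Subgroup.isFiniteRelIndex_of_finiteIndex (K := Γ)).relIndex_ne_zero
  rw [cosetDensity, cosetDensity, ncard_image_mk_of_le h hS, ← Subgroup.relIndex_mul_index h,
    Nat.cast_mul, Nat.cast_mul, mul_comm (Γ'.relIndex Γ : ℝ), mul_div_mul_right _ _ hr]

lemma cosetDensity_mono (Γ : Subgroup G) [Γ.FiniteIndex] {S T : Set G} (h : S ⊆ T) :
    cosetDensity Γ S ≤ cosetDensity Γ T :=
  div_le_div_of_nonneg_right (Nat.cast_le.mpr (ncard_le_ncard (image_mono h) (toFinite _)))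
    (Nat.cast_nonneg _)

lemma cosetDensity_le_one (Γ : Subgroup G) [Γ.FiniteIndex] (S : Set G) :
    cosetDensity Γ S ≤ 1 :=
  div_le_one_of_le₀ (Nat.cast_le.mpr (ncard_le_card _)) (Nat.cast_nonneg _)

lemma cosetDensity_perSet_anti (x : G → Bool) {Γ' Γ : Subgroup G} (h : Γ' ≤ Γ) [Γ'.FiniteIndex] :
    cosetDensity Γ (perSet x Γ) ≤ cosetDensity Γ' (perSet x Γ') := by
  rw [← cosetDensity_eq_of_le h fun _ hg _ hγ => perSet_mul hg hγ]
  exact cosetDensity_mono Γ' (perSet_anti x h)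

lemma IsFundDom.bijOn {Γ : Subgroup G} {E : Finset G} (hE : IsFundDom Γ E) :
    BijOn ((↑) : G → G ⧸ Γ) E univ := by
  refine ⟨mapsTo_univ _ _, fun d₁ h₁ d₂ h₂ h => ?_, fun c _ => ?_⟩
  · exact (hE d₁).unique ⟨h₁, by simp⟩ ⟨h₂, QuotientGroup.eq.mp h⟩
  · induction c using QuotientGroup.induction_on with
    | H g =>
      obtain ⟨d, ⟨hd, hgd⟩, -⟩ := hE g
      exact ⟨d, hd, (QuotientGroup.eq.mpr hgd).symm⟩

lemma IsFundDom.ncard_inter {Γ : Subgroup G} {E : Finset G} (hE : IsFundDom Γ E) {S : Set G}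
    (hS : ∀ g ∈ S, ∀ γ ∈ Γ, g * γ ∈ S) :
    ((E : Set G) ∩ S).ncard = ((↑) '' S : Set (G ⧸ Γ)).ncard := by
  have himage : ((↑) '' ((E : Set G) ∩ S) : Set (G ⧸ Γ)) = (↑) '' S := by
    nth_rw 1 [← preimage_image_mk_eq hS]
    rw [image_inter_preimage, hE.bijOn.image_eq, univ_inter]
  rw [← himage, (hE.bijOn.injOn.mono inter_subset_left).ncard_image]

lemma IsFundDom.card_eq_index {Γ : Subgroup G} {E : Finset G} (hE : IsFundDom Γ E) :
    E.card = Γ.index := by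
  simpa [Subgroup.index] using hE.ncard_inter (S := univ) fun _ _ _ _ => trivial

lemma IsFundDom.perDensity_eq (x : G → Bool) {Γ : Subgroup G} {E : Finset G}
    (hE : IsFundDom Γ E) : perDensity x Γ E = cosetDensity Γ (perSet x Γ) := by
  rw [perDensity, hE.ncard_inter fun _ hg _ hγ => perSet_mul hg hγ, hE.card_eq_index, cosetDensity]

lemma isLUB_regConst (x : G → Bool) :
    IsLUB {r | ∃ (Λ : Subgroup G) (F : Finset G),
      Λ.FiniteIndex ∧ IsFundDom Λ F ∧ r = perDensity x Λ F} (regConst x) := by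
  refine isLUB_csSup ⟨_, ⊤, {1}, inferInstance,
    fun _ => ⟨1, ⟨Finset.mem_singleton_self _, Subgroup.mem_top _⟩,
      fun _ hd => Finset.mem_singleton.mp hd.1⟩, rfl⟩ ⟨1, ?_⟩
  rintro _ ⟨Λ, F, hΛ, hF, rfl⟩
  rw [hF.perDensity_eq]
  exact cosetDensity_le_one Λ _

lemma Subgroup.exists_eq_of_antitone_of_le {Λ : Subgroup G} [Λ.FiniteIndex]
    {K : ℕ → Subgroup G} (hK : Antitone K) (hΛ : ∀ n, Λ ≤ K n) :
    ∃ n₀, ∀ n ≥ n₀, K n = K n₀ := by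
  have hbdd : BddAbove (range fun n => (K n).index) :=
    ⟨Λ.index, forall_mem_range.mpr fun n => Subgroup.index_antitone (hΛ n)⟩
  obtain ⟨n₀, hn₀⟩ := Nat.sSup_mem (range_nonempty _) hbdd
  refine ⟨n₀, fun n hn => (hK hn).eq_of_not_lt fun hlt => ?_⟩
  have : (K n).FiniteIndex := Subgroup.finiteIndex_of_le (hΛ n)
  exact (Subgroup.index_strictAnti hlt).not_ge ((le_csSup hbdd (mem_range_self n)).trans_eq hn₀.symm)

lemma exists_cosetDensity_perSet_le {Γ : ℕ → Subgroup G} (hanti : Antitone Γ)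
    (hnorm : ∀ n, (Γ n).Normal) (hfi : ∀ n, (Γ n).FiniteIndex) {x : G → Bool}
    (hrel : ∀ g : G, ∃ n, g ∈ perSet x (Γ n)) (Λ : Subgroup G) [Λ.FiniteIndex] :
    ∃ n, cosetDensity Λ (perSet x Λ) ≤ cosetDensity (Γ n) (perSet x (Γ n)) := by
  obtain ⟨n₀, hn₀⟩ := Subgroup.exists_eq_of_antitone_of_le (Λ := Λ) (K := fun n => Λ ⊔ Γ n)
    (fun _ _ h => sup_le_sup_left (hanti h) Λ) fun _ => le_sup_left
  have hper : perSet x (Λ ⊔ Γ n₀) = perSet x Λ := perSet_eq_of_le_of_exists_normal le_sup_left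
    fun g => by
      obtain ⟨m, hm⟩ := hrel g
      exact ⟨Γ (max m n₀), hnorm _, (hn₀ _ (le_max_right _ _)).ge,
        perSet_anti x (hanti (le_max_left _ _)) hm⟩
  have := hfi n₀
  refine ⟨n₀, ?_⟩
  calc cosetDensity Λ (perSet x Λ) = cosetDensity (Λ ⊔ Γ n₀) (perSet x (Λ ⊔ Γ n₀)) := by
        rw [← cosetDensity_eq_of_le le_sup_left fun _ hg _ hγ => perSet_mul hg hγ, hper]
    _ ≤ cosetDensity (Γ n₀) (perSet x (Γ n₀)) := cosetDensity_perSet_anti x le_sup_right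

end PeriodicDensity

theorem stmt_7_general {G : Type*} [Group G]
    (Γ : ℕ → Subgroup G) (hdec : ∀ n, Γ (n + 1) ≤ Γ n)
    (hnorm : ∀ n, (Γ n).Normal) (hfi : ∀ n, (Γ n).FiniteIndex)
    (x : G → Bool) (hrel : ∀ g : G, ∃ n, g ∈ perSet x (Γ n))
    (E : ℕ → Finset G) (hE : ∀ n, IsFundDom (Γ n) (E n)) :
    (∀ n, ∀ E' : Finset G, IsFundDom (Γ n) E' →
        perDensity x (Γ n) (E n) = perDensity x (Γ n) E') ∧
      Monotone (fun n => perDensity x (Γ n) (E n)) ∧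
      Filter.Tendsto (fun n => perDensity x (Γ n) (E n)) Filter.atTop (nhds (regConst x)) := by
  have hanti : Antitone Γ := antitone_nat_of_succ_le hdec
  have hD : ∀ n, perDensity x (Γ n) (E n) = cosetDensity (Γ n) (perSet x (Γ n)) :=
    fun n => (hE n).perDensity_eq x
  have hmono : Monotone fun n => perDensity x (Γ n) (E n) := fun m n hmn => by
    have := hfi n
    simpa only [hD] using cosetDensity_perSet_anti x (hanti hmn)
  refine ⟨fun n E' hE' => by rw [hD, hE'.perDensity_eq], hmono, tendsto_atTop_isLUB hmono ?_⟩
  refine (isLUB_congr ?_).mp (isLUB_regConst x)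
  ext b
  refine ⟨fun hb => forall_mem_range.mpr fun n => hb ⟨Γ n, E n, hfi n, hE n, rfl⟩, ?_⟩
  rintro hb _ ⟨Λ, F, hΛ, hF, rfl⟩
  obtain ⟨n, hn⟩ := exists_cosetDensity_perSet_le hanti hnorm hfi hrel Λ
  calc perDensity x Λ F = cosetDensity Λ (perSet x Λ) := hF.perDensity_eq x
    _ ≤ perDensity x (Γ n) (E n) := (hD n).symm ▸ hn
    _ ≤ b := hb (mem_range_self n)

/-- For an array `x` relative to a decreasing sequence `(Γ_n)` of finite-index normal
subgroups, the densities `D(x, Γ_n)` are independent of the choice of fundamental domains,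
nondecreasing in `n`, and converge to the regularity constant `𝒟(x)`. -/
theorem stmt_7 {G : Type*} [Group G] [Countable G]
    (Γ : ℕ → Subgroup G) (hdec : ∀ n, Γ (n + 1) ≤ Γ n)
    (hnorm : ∀ n, (Γ n).Normal) (hfi : ∀ n, (Γ n).FiniteIndex)
    (x : G → Bool) (hrel : ∀ g : G, ∃ n, g ∈ perSet x (Γ n))
    (E : ℕ → Finset G) (hE : ∀ n, IsFundDom (Γ n) (E n)) :
    (∀ n, ∀ E' : Finset G, IsFundDom (Γ n) E' →
        perDensity x (Γ n) (E n) = perDensity x (Γ n) E') ∧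
      Monotone (fun n => perDensity x (Γ n) (E n)) ∧
      Filter.Tendsto (fun n => perDensity x (Γ n) (E n)) Filter.atTop (nhds (regConst x)) :=
  stmt_7_general Γ hdec hnorm hfi x hrel E hE
end

section
/- Let G be a countably infinite group, (F_n) a left Følner sequence in G, H a compact metrizable topological group with normalized Haar probability measure ν, τ : G → H an injective group homomorphism with dense image, and W ⊆ H a Borel set with ν(∂W) = 0. Fix ξ ∈ H, and suppose x, y : G → {0,1} both satisfy the sandwich condition: for all g ∈ G, if τ(g)ξ ∈ interior(W) then the value at g is 1, and if the value at g is 1 then τ(g)ξ ∈ W. Then D_F(x,y) = 0, i.e. limsup_{n→∞} (1/#F_n) · #{g ∈ F_n : x(g) ≠ y(g)} = 0. -/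
open MeasureTheory Filter Set Topology
open scoped symmDiff ENNReal

/-!
Where `x` and `y` differ, `τ g * ξ` lies in `∂W`, a closed `ν`-null set, whose indicator is
dominated by a continuous `f : H → [0,1]` with `∫ f < ε`. Since `τ(G)` is dense, `∫ f` is
approximated from above, uniformly in `h`, by a convex combination of translates `f (τ u * h)`.
A Følner average is almost invariant under left multiplication by the finitely many `u`, so the
Følner averages of `g ↦ f (τ g * ξ)` have `limsup ≤ ∫ f + ε`, and they dominate the density of
the disagreement set of `x` and `y`.
-/

section MeasureLemmas

variable {X : Type*} [MeasurableSpace X]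

lemma MeasureTheory.Measure.isMulRightInvariant_of_isHaarMeasure_of_isProbabilityMeasure
    [Group X] [TopologicalSpace X] [IsTopologicalGroup X] [LocallyCompactSpace X] [BorelSpace X]
    (μ : Measure X) [μ.IsHaarMeasure] [IsProbabilityMeasure μ] : μ.IsMulRightInvariant where
  map_mul_right_eq_self g := by
    have : IsProbabilityMeasure (μ.map (· * g)) :=
      isProbabilityMeasure_map (measurable_mul_const g).aemeasurable
    exact Measure.isHaarMeasure_eq_of_isProbabilityMeasure _ μ

lemma exists_continuous_eqOn_one_integral_lt [TopologicalSpace X]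
    [TopologicalSpace.PseudoMetrizableSpace X] [OpensMeasurableSpace X]
    (μ : Measure X) [IsFiniteMeasure μ] {K : Set X} (hK : IsClosed K) (hμK : μ K = 0)
    {ε : ℝ} (hε : 0 < ε) :
    ∃ f : X → ℝ, Continuous f ∧ (∀ x, 0 ≤ f x ∧ f x ≤ 1) ∧ EqOn f 1 K ∧ ∫ x, f x ∂μ < ε := by
  obtain ⟨n, hn⟩ := ((HasOuterApproxClosed.tendsto_lintegral_apprSeq hK μ).eventually
    (gt_mem_nhds (hμK ▸ ENNReal.ofReal_pos.2 hε))).exists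
  refine ⟨fun x => hK.apprSeq n x, by fun_prop, fun x => ⟨by positivity, ?_⟩,
    fun x hx => by simp [HasOuterApproxClosed.apprSeq_apply_eq_one hK n hx], ?_⟩
  · exact_mod_cast HasOuterApproxClosed.apprSeq_apply_le_one hK n x
  · have hint : Integrable (fun x => (hK.apprSeq n x : ℝ)) μ :=
      .of_bound (by fun_prop) 1 (ae_of_all _ fun x => by
        simpa using HasOuterApproxClosed.apprSeq_apply_le_one hK n x)
    rw [lintegral_coe_eq_integral _ hint] at hn
    exact (ENNReal.ofReal_lt_ofReal_iff hε).1 hn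

lemma sum_measureReal_mul_le_integral_add {ι : Type*} [Fintype ι] (μ : Measure X)
    [IsProbabilityMeasure μ] {D : ι → Set X} (hDm : ∀ j, MeasurableSet (D j))
    (hD : Pairwise (Function.onFun Disjoint D)) (hDcover : ⋃ j, D j = univ) {g : X → ℝ}
    (hg : Integrable g μ) {c : ι → ℝ} {δ : ℝ} (hc : ∀ j, ∀ s ∈ D j, c j ≤ g s + δ) :
    ∑ j, μ.real (D j) * c j ≤ ∫ s, g s ∂μ + δ := by
  have hgδ : Integrable (fun s => g s + δ) μ := hg.add (integrable_const δ)
  calc ∑ j, μ.real (D j) * c j = ∑ j, ∫ _ in D j, c j ∂μ := by simp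
    _ ≤ ∑ j, ∫ s in D j, (g s + δ) ∂μ := Finset.sum_le_sum fun j _ =>
        setIntegral_mono_on (integrableOn_const (measure_ne_top μ _)) hgδ.integrableOn (hDm j)
          (hc j)
    _ = ∫ s, g s ∂μ + δ := by
        rw [← integral_iUnion_fintype hDm hD fun j => hgδ.integrableOn, hDcover, setIntegral_univ,
          integral_add hg (integrable_const δ)]
        simp

end MeasureLemmas

/-- The right translates `s ↦ f (s * h)` are uniformly equicontinuous, so one Riemann sum over a
fine partition, with tags in the dense set `τ(G)`, works for every `h` at once. -/
lemma exists_convex_comb_translates_le {G H : Type*} [Group H] [PseudoMetricSpace H]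
    [IsTopologicalGroup H] [CompactSpace H] [MeasurableSpace H] [BorelSpace H]
    (ν : Measure H) [ν.IsHaarMeasure] [IsProbabilityMeasure ν] {τ : G → H} (hτ : DenseRange τ)
    {f : H → ℝ} (hf : Continuous f) {δ : ℝ} (hδ : 0 < δ) :
    ∃ (k : ℕ) (w : Fin k → ℝ) (u : Fin k → G), (∀ j, 0 ≤ w j) ∧ ∑ j, w j = 1 ∧
      ∀ h, ∑ j, w j * f (τ (u j) * h) ≤ ∫ s, f s ∂ν + δ := by
  have := ν.isMulRightInvariant_of_isHaarMeasure_of_isProbabilityMeasure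
  obtain ⟨r, hr, hequi⟩ : ∃ r > 0, ∀ s t h : H, dist s t < r → f (t * h) ≤ f (s * h) + δ := by
    obtain ⟨r, hr, hu⟩ := Metric.uniformContinuous_iff.1
      (CompactSpace.uniformContinuous_of_continuous (hf.comp continuous_mul)) δ hδ
    refine ⟨r, hr, fun s t h hst => ?_⟩
    have := hu (a := (s, h)) (b := (t, h)) (by simpa [Prod.dist_eq] using hst)
    simp only [Function.comp_apply, Real.dist_eq, abs_sub_lt_iff] at this
    linarith [this.2]
  obtain ⟨t, ht⟩ := isCompact_univ.elim_finite_subcover (fun g : G => Metric.ball (τ g) r)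
    (fun _ => Metric.isOpen_ball) fun h _ => by
      obtain ⟨g, hg⟩ := hτ.exists_dist_lt h hr
      exact mem_iUnion.2 ⟨g, Metric.mem_ball.2 hg⟩
  let u : Fin t.card → G := fun j => t.equivFin.symm j
  let D := disjointed fun j => Metric.ball (τ (u j)) r
  have hDm : ∀ j, MeasurableSet (D j) := fun j => by
    rw [show D j = _ from disjointed_eq_inter_compl _ j]
    exact Metric.isOpen_ball.measurableSet.inter
      (.iInter fun i => .iInter fun _ => Metric.isOpen_ball.measurableSet.compl)
  have hDcover : ⋃ j, D j = univ := by
    refine iUnion_disjointed.trans (eq_univ_of_forall fun h => ?_)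
    obtain ⟨g, hg, hhg⟩ := mem_iUnion₂.1 (ht (mem_univ h))
    exact mem_iUnion.2 ⟨t.equivFin ⟨g, hg⟩, by simpa [u] using hhg⟩
  refine ⟨t.card, fun j => ν.real (D j), u, fun j => measureReal_nonneg, ?_, fun h => ?_⟩
  · rw [← measureReal_iUnion_fintype (disjoint_disjointed _) hDm, hDcover, probReal_univ]
  · calc ∑ j, ν.real (D j) * f (τ (u j) * h) ≤ ∫ s, f (s * h) ∂ν + δ :=
          sum_measureReal_mul_le_integral_add ν hDm (disjoint_disjointed _) hDcover
            ((hf.comp (continuous_mul_const h)).integrable_of_hasCompactSupport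
              (.of_compactSpace _))
            fun j s hs => hequi _ _ h (disjointed_subset _ j hs)
      _ = ∫ s, f s ∂ν + δ := by rw [integral_mul_right_eq_self f h]

open scoped Finset

lemma Finset.sum_le_sum_mul_left_add_card_symmDiff {G : Type*} [Group G] [DecidableEq G]
    (s : Finset G) (u : G) {φ : G → ℝ} (hφ : ∀ g, 0 ≤ φ g ∧ φ g ≤ 1) :
    ∑ g ∈ s, φ g ≤ ∑ g ∈ s, φ (u * g) + #(s.image (u * ·) ∆ s) := by
  set t := s.image (u * ·)
  have hts : ∑ g ∈ t, φ g = ∑ g ∈ s, φ (u * g) :=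
    Finset.sum_image fun _ _ _ _ => mul_left_cancel
  have hst : #(s \ t) ≤ #(t ∆ s) := Finset.card_le_card (by rw [symmDiff_def]; exact le_sup_right)
  calc ∑ g ∈ s, φ g ≤ ∑ g ∈ s ∪ t, φ g :=
        Finset.sum_le_sum_of_subset_of_nonneg Finset.subset_union_left fun g _ _ => (hφ g).1
    _ = ∑ g ∈ s \ t, φ g + ∑ g ∈ t, φ g := by
        rw [← Finset.union_sdiff_right, Finset.sum_sdiff Finset.subset_union_right]
    _ ≤ #(s \ t) + ∑ g ∈ t, φ g := by
        grw [Finset.sum_le_sum fun g _ => (hφ g).2]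
        simp
    _ ≤ ∑ g ∈ s, φ (u * g) + #(t ∆ s) := by
        rw [hts, add_comm]
        gcongr

lemma IsFolner.limsup_avg_le {G : Type*} [Group G] {F : ℕ → Finset G} (hF : IsFolner F)
    {φ : G → ℝ} (hφ : ∀ g, 0 ≤ φ g ∧ φ g ≤ 1) {ι : Type*} [Fintype ι] {w : ι → ℝ} {u : ι → G}
    (hw0 : ∀ j, 0 ≤ w j) (hw1 : ∑ j, w j = 1) {M : ℝ} (hM : ∀ g, ∑ j, w j * φ (u j * g) ≤ M) :
    limsup (fun n => (∑ g ∈ F n, φ g) / #(F n)) atTop ≤ M := by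
  classical
  set d : ι → ℕ → ℝ := fun j n => #((F n).image (u j * ·) ∆ F n) / #(F n)
  have hbound : ∀ n, (∑ g ∈ F n, φ g) / #(F n) ≤ M + ∑ j, w j * d j n := by
    intro n
    have hpos : (0 : ℝ) < #(F n) := by exact_mod_cast (hF.1 n).card_pos
    rw [div_le_iff₀ hpos, add_mul, Finset.sum_mul]
    calc ∑ g ∈ F n, φ g = ∑ j, w j * ∑ g ∈ F n, φ g := by rw [← Finset.sum_mul, hw1, one_mul]
      _ ≤ ∑ j, w j * (∑ g ∈ F n, φ (u j * g) + #((F n).image (u j * ·) ∆ F n)) := by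
          gcongr with j
          · exact hw0 j
          · exact (F n).sum_le_sum_mul_left_add_card_symmDiff (u j) hφ
      _ = ∑ g ∈ F n, ∑ j, w j * φ (u j * g) + ∑ j, w j * d j n * #(F n) := by
          simp only [mul_add, Finset.sum_add_distrib, Finset.mul_sum, d, mul_assoc,
            div_mul_cancel₀ _ hpos.ne']
          rw [Finset.sum_comm]
      _ ≤ ∑ _g ∈ F n, M + ∑ j, w j * d j n * #(F n) := by gcongr with g; exact hM g
      _ = M * #(F n) + ∑ j, w j * d j n * #(F n) := by rw [Finset.sum_const, nsmul_eq_mul, mul_comm]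
  have hlim : Tendsto (fun n => M + ∑ j, w j * d j n) atTop (𝓝 M) := by
    have := tendsto_finsetSum Finset.univ fun j _ => (hF.2 (u j)).const_mul (w j)
    simpa only [mul_zero, Finset.sum_const_zero, add_zero] using tendsto_const_nhds.add this
  calc limsup (fun n => (∑ g ∈ F n, φ g) / #(F n)) atTop
      ≤ limsup (fun n => M + ∑ j, w j * d j n) atTop :=
        limsup_le_limsup (.of_forall hbound)
          (isCoboundedUnder_le_of_le atTop fun n =>
            div_nonneg (Finset.sum_nonneg fun g _ => (hφ g).1) (Nat.cast_nonneg _))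
          hlim.isBoundedUnder_le
    _ = M := hlim.limsup_eq

lemma besicovitchDist_nonneg {G : Type*} (F : ℕ → Finset G) (x y : G → Bool) :
    0 ≤ besicovitchDist F x y :=
  le_limsup_of_frequently_le (.of_forall fun n => by positivity)
    (isBoundedUnder_of ⟨1, fun n => div_le_one_of_le₀
      (by exact_mod_cast Finset.card_filter_le _ _) (Nat.cast_nonneg _)⟩)

lemma besicovitchDist_le_limsup_avg {G : Type*} (F : ℕ → Finset G) {x y : G → Bool} {φ : G → ℝ}
    (hφ : ∀ g, 0 ≤ φ g ∧ φ g ≤ 1) (hxy : ∀ g, x g ≠ y g → φ g = 1) :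
    besicovitchDist F x y ≤ limsup (fun n => (∑ g ∈ F n, φ g) / #(F n)) atTop := by
  refine limsup_le_limsup (.of_forall fun n => ?_)
    (isCoboundedUnder_le_of_le atTop fun n => by positivity)
    (isBoundedUnder_of ⟨1, fun n => div_le_one_of_le₀ ?_ (Nat.cast_nonneg _)⟩)
  · dsimp only
    gcongr
    rw [Finset.natCast_card_filter]
    gcongr with g
    split_ifs with h
    exacts [(hxy g h).ge, (hφ g).1]
  · simpa using Finset.sum_le_card_nsmul (F n) φ 1 fun g _ => (hφ g).2

lemma mem_frontier_of_ne_of_sandwich {X : Type*} [TopologicalSpace X] {W : Set X} {z : X}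
    {a b : Bool} (ha : (z ∈ interior W → a = true) ∧ (a = true → z ∈ W))
    (hb : (z ∈ interior W → b = true) ∧ (b = true → z ∈ W)) (hab : a ≠ b) :
    z ∈ frontier W := by
  have hz : z ∈ W := by cases a <;> cases b <;> simp_all
  exact ⟨subset_closure hz, fun hi => hab ((ha.1 hi).trans (hb.1 hi).symm)⟩

theorem stmt_8_general {G : Type*} [Group G]
    {H : Type*} [Group H] [TopologicalSpace H] [IsTopologicalGroup H]
    [CompactSpace H] [TopologicalSpace.MetrizableSpace H] [MeasurableSpace H] [BorelSpace H]
    (ν : Measure H) [ν.IsHaarMeasure] [IsProbabilityMeasure ν]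
    (τ : G →* H) (hdense : DenseRange ⇑τ)
    (F : ℕ → Finset G) (hF : IsFolner F)
    (W : Set H) (hreg : ν (frontier W) = 0)
    (ξ : H) (x y : G → Bool)
    (hx : ∀ g : G, (τ g * ξ ∈ interior W → x g = true) ∧ (x g = true → τ g * ξ ∈ W))
    (hy : ∀ g : G, (τ g * ξ ∈ interior W → y g = true) ∧ (y g = true → τ g * ξ ∈ W)) :
    besicovitchDist F x y = 0 := by
  let : MetricSpace H := TopologicalSpace.metrizableSpaceMetric H
  refine le_antisymm (le_of_forall_pos_le_add fun ε hε => ?_) (besicovitchDist_nonneg F x y)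
  obtain ⟨f, hfc, hf01, hf1, hfε⟩ :=
    exists_continuous_eqOn_one_integral_lt ν isClosed_frontier hreg (half_pos hε)
  obtain ⟨k, w, u, hw0, hw1, hwf⟩ := exists_convex_comb_translates_le ν hdense hfc (half_pos hε)
  calc besicovitchDist F x y ≤ limsup (fun n => (∑ g ∈ F n, f (τ g * ξ)) / #(F n)) atTop :=
        besicovitchDist_le_limsup_avg F (fun g => hf01 _)
          fun g hg => hf1 (mem_frontier_of_ne_of_sandwich (hx g) (hy g) hg)
    _ ≤ ∫ s, f s ∂ν + ε / 2 :=
        hF.limsup_avg_le (fun g => hf01 _) hw0 hw1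
          fun g => by simpa only [map_mul, mul_assoc] using hwf (τ g * ξ)
    _ ≤ 0 + ε := by linarith

/-- If `W` is a regular Borel window and `x`, `y` both satisfy the sandwich condition
`x_{int(W)ξ⁻¹} ≤ · ≤ x_{Wξ⁻¹}`, then their Besicovitch pseudodistance vanishes. -/
theorem stmt_8 {G : Type*} [Group G] [Countable G] [Infinite G]
    {H : Type*} [Group H] [TopologicalSpace H] [IsTopologicalGroup H]
    [CompactSpace H] [TopologicalSpace.MetrizableSpace H] [MeasurableSpace H] [BorelSpace H]
    (ν : Measure H) [ν.IsHaarMeasure] [IsProbabilityMeasure ν]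
    (τ : G →* H) (hinj : Function.Injective ⇑τ) (hdense : DenseRange ⇑τ)
    (F : ℕ → Finset G) (hF : IsFolner F)
    (W : Set H) (hWm : MeasurableSet W) (hreg : ν (frontier W) = 0)
    (ξ : H) (x y : G → Bool)
    (hx : ∀ g : G, (τ g * ξ ∈ interior W → x g = true) ∧ (x g = true → τ g * ξ ∈ W))
    (hy : ∀ g : G, (τ g * ξ ∈ interior W → y g = true) ∧ (y g = true → τ g * ξ ∈ W)) :
    besicovitchDist F x y = 0 :=
  stmt_8_general ν τ hdense F hF W hreg ξ x y hx hy
end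

section
/- Let s ≥ 1 and p ≥ 3 be integers, and let (A_n)_{n≥1} be a sequence of finite sets with #A_1 = s·p and #A_n = p for all n ≥ 2. Let X = Π_{n≥1} A_n. Fix t ∈ [0,1] and a set N ⊆ ℕ with lim_{n→∞} #{1 ≤ k ≤ n : k ∈ N}/n = t. For n ≥ 1 set ε(t,n) = p^{−#{1 ≤ k ≤ n : k ∉ N}} · (p/(p−2))^{−#{1 ≤ k ≤ n : k ∈ N}}, and define the ultrametric d_t on X by d_t(ξ,ξ) = 0 and d_t(ξ,η) = ε(t,n) where n = min{k : ξ_k ≠ η_k} for ξ ≠ η. Then the box dimension of (X, d_t) exists and equals (1 − t·log(p−2)/log p)^{−1}; that is, lim_{ε→0⁺} log Sep(X, d_t, ε)/(−log ε) = (1 − t·log(p−2)/log p)^{−1}. -/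
open MeasureTheory Filter Set Topology
open scoped symmDiff ENNReal

open Classical in
/-- `#{1 ≤ k ≤ n : k ∈ N}`, with indices shifted to start at `0`. -/
noncomputable def densCount (N : Set ℕ) (n : ℕ) : ℕ :=
  ((Finset.range n).filter fun k => k ∈ N).card

open Classical in
/-- The scale `ε(t,n)` (here `m` is the `0`-based index, corresponding to `n = m + 1`). -/
noncomputable def epsWeight (p : ℕ) (N : Set ℕ) (m : ℕ) : ℝ :=
  ((p : ℝ) ^ ((Finset.range (m + 1)).filter (fun k => k ∉ N)).card)⁻¹ *
    (((p : ℝ) / ((p : ℝ) - 2)) ^ ((Finset.range (m + 1)).filter (fun k => k ∈ N)).card)⁻¹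

open Classical in
/-- The ultrametric `d_t` on the product space. -/
noncomputable def ultraDist {A : ℕ → Type*} (p : ℕ) (N : Set ℕ) (ξ η : (n : ℕ) → A n) : ℝ :=
  if h : ξ = η then 0 else epsWeight p N (Nat.find (Function.ne_iff.mp h))

/-!
For `w (M + 1) < ε ≤ w M`, where `w m = epsWeight p N m`, two points are `ε`-separated exactly
when they differ in one of the first `M + 1` coordinates, so `Sep(X, d_t, ε) = s p^(M+1)`.
Moreover `-log (w m) = (m + 1) log p - #(N ∩ [0, m]) log (p - 2) ~ m (log p - t log (p - 2))`,
and `-log ε` lies between `-log (w M)` and `-log (w (M + 1))`, so the ratio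
`log Sep / (-log ε)` is squeezed to `log p / (log p - t log (p - 2))`.
-/

open Real

section SeparatedSets

theorem eLog_natCast {n : ℕ} (hn : n ≠ 0) : eLog n = (Real.log n : EReal) := by
  rw [eLog, if_neg (by exact_mod_cast hn), if_neg (ENNReal.natCast_ne_top n),
    ENNReal.toReal_natCast]

theorem sepCount_univ_eq_card {Z Y : Type*} [Fintype Y] {r : Z → Y}
    (hr : Function.Surjective r) {d : Z → Z → ℝ} {ε : ℝ}
    (hd : ∀ z z', z ≠ z' → (ε ≤ d z z' ↔ r z ≠ r z')) :
    sepCount univ d ε = Fintype.card Y := by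
  classical
  apply le_antisymm
  · refine iSup₂_le fun B hB => ?_
    have hinj : Set.InjOn r B := fun z hz z' hz' hzz' => by
      by_contra hne
      exact (hd z z' hne).1 (hB.2 hz hz' hne) hzz'
    exact_mod_cast Finset.card_le_card_of_injOn r (fun _ _ => Finset.mem_univ _) hinj
  · set B := Finset.univ.image (Function.surjInv hr)
    have hB : (B : Set Z).Pairwise fun z z' => ε ≤ d z z' := by
      simp only [B, Finset.coe_image, Finset.coe_univ, Set.image_univ]
      rintro _ ⟨y, rfl⟩ _ ⟨y', rfl⟩ hne
      rw [hd _ _ hne, Function.surjInv_eq hr, Function.surjInv_eq hr]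
      exact fun h => hne (h ▸ rfl)
    calc (Fintype.card Y : ℝ≥0∞) = B.card := by
          rw [Finset.card_image_of_injective _ (Function.injective_surjInv hr), Finset.card_univ]
      _ ≤ sepCount univ d ε :=
          le_iSup₂ (f := fun (B : Finset Z) _ => (B.card : ℝ≥0∞)) B ⟨subset_univ _, hB⟩

theorem surjective_restrict_fin {A : ℕ → Type*} [∀ n, Nonempty (A n)] (M : ℕ) :
    Function.Surjective fun (ξ : ∀ n, A n) (i : Fin M) => ξ i := by
  classical
  intro y
  refine ⟨fun n => if h : n < M then y ⟨n, h⟩ else Classical.arbitrary _, ?_⟩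
  funext i
  simp [i.isLt]

end SeparatedSets

section Scales

theorem Antitone.le_iff_le_of_mem_Ioc {α : Type*} [LinearOrder α] {w : ℕ → α} (hw : Antitone w)
    {M : ℕ} {ε : α} (hε : ε ∈ Ioc (w (M + 1)) (w M)) (k : ℕ) : ε ≤ w k ↔ k ≤ M := by
  refine ⟨fun h => ?_, fun hk => hε.2.trans (hw hk)⟩
  by_contra! hk
  exact (hε.1.trans_le h).not_ge (hw hk)

variable {w : ℕ → ℝ}

open Classical in
noncomputable def scaleIndex (w : ℕ → ℝ) (ε : ℝ) : ℕ :=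
  if h : ∃ m, w (m + 1) < ε then Nat.find h else 0

theorem scaleIndex_mem_Ioc (hlim : Tendsto w atTop (𝓝 0)) {ε : ℝ} (hε : ε ∈ Ioc 0 (w 0)) :
    ε ∈ Ioc (w (scaleIndex w ε + 1)) (w (scaleIndex w ε)) := by
  have hex : ∃ m, w (m + 1) < ε :=
    ((hlim.comp (tendsto_add_atTop_nat 1)).eventually (gt_mem_nhds hε.1)).exists
  rw [scaleIndex, dif_pos hex]
  refine ⟨Nat.find_spec hex, ?_⟩
  cases h : Nat.find hex with
  | zero => exact hε.2
  | succ k => exact not_lt.1 (Nat.find_min hex (m := k) (by omega))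

theorem tendsto_scaleIndex (hw : Antitone w) (hpos : ∀ m, 0 < w m)
    (hlim : Tendsto w atTop (𝓝 0)) : Tendsto (scaleIndex w) (𝓝[>] 0) atTop := by
  refine tendsto_atTop.2 fun K => ?_
  filter_upwards [Ioc_mem_nhdsGT (hpos K)] with ε hε
  have hex : ∃ m, w (m + 1) < ε :=
    ((hlim.comp (tendsto_add_atTop_nat 1)).eventually (gt_mem_nhds hε.1)).exists
  rw [scaleIndex, dif_pos hex, Nat.le_find_iff]
  exact fun m hm => not_lt.2 (hε.2.trans (hw (by omega)))

theorem tendsto_div_neg_log_scaleIndex (hw : Antitone w) (hpos : ∀ m, 0 < w m)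
    (hlt : ∀ m, w m < 1) (hlim : Tendsto w atTop (𝓝 0)) {g : ℕ → ℝ} (hg : ∀ m, 0 ≤ g m)
    {c : ℝ} (h₀ : Tendsto (fun m => g m / -log (w m)) atTop (𝓝 c))
    (h₁ : Tendsto (fun m => g m / -log (w (m + 1))) atTop (𝓝 c)) :
    Tendsto (fun ε => g (scaleIndex w ε) / -log ε) (𝓝[>] 0) (𝓝 c) := by
  have hbounds : ∀ᶠ ε in 𝓝[>] (0 : ℝ),
      g (scaleIndex w ε) / -log (w (scaleIndex w ε + 1)) ≤ g (scaleIndex w ε) / -log ε ∧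
      g (scaleIndex w ε) / -log ε ≤ g (scaleIndex w ε) / -log (w (scaleIndex w ε)) := by
    filter_upwards [Ioc_mem_nhdsGT (hpos 0)] with ε hε
    obtain ⟨hlo, hhi⟩ := scaleIndex_mem_Ioc hlim hε
    set M := scaleIndex w ε
    have hLM : 0 < -log (w M) := neg_pos.2 (log_neg (hpos M) (hlt M))
    have hle : -log (w M) ≤ -log ε := neg_le_neg (log_le_log hε.1 hhi)
    have hge : -log ε ≤ -log (w (M + 1)) := neg_le_neg (log_le_log (hpos _) hlo.le)
    exact ⟨div_le_div_of_nonneg_left (hg M) (hLM.trans_le hle) hge,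
      div_le_div_of_nonneg_left (hg M) hLM hle⟩
  have hM := tendsto_scaleIndex hw hpos hlim
  exact tendsto_of_tendsto_of_tendsto_of_le_of_le' (h₁.comp hM) (h₀.comp hM)
    (hbounds.mono fun _ h => h.1) (hbounds.mono fun _ h => h.2)

end Scales

section Asymptotics

theorem tendsto_natCast_add_div_natCast (k : ℕ) :
    Tendsto (fun n : ℕ => ((n + k : ℕ) : ℝ) / n) atTop (𝓝 1) := by
  simpa using (tendsto_natCast_div_add_atTop (k : ℝ)).inv₀ one_ne_zero

theorem Filter.Tendsto.comp_add_div_natCast {u : ℕ → ℝ} {a : ℝ}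
    (h : Tendsto (fun n : ℕ => u n / n) atTop (𝓝 a)) (k : ℕ) :
    Tendsto (fun n : ℕ => u (n + k) / n) atTop (𝓝 a) := by
  have := ((tendsto_add_atTop_iff_nat k).2 h).mul (tendsto_natCast_add_div_natCast k)
  rw [mul_one] at this
  refine this.congr' ((eventually_ne_atTop 0).mono fun _ hn => ?_)
  exact div_mul_div_cancel₀ (Nat.cast_ne_zero.2 (by omega))

theorem tendsto_div_of_tendsto_div_natCast {g L : ℕ → ℝ} {a b : ℝ}
    (hg : Tendsto (fun n : ℕ => g n / n) atTop (𝓝 a))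
    (hL : Tendsto (fun n : ℕ => L n / n) atTop (𝓝 b)) (hb : b ≠ 0) :
    Tendsto (fun n => g n / L n) atTop (𝓝 (a / b)) :=
  (hg.div hL hb).congr' ((eventually_ne_atTop 0).mono fun _ hn =>
    div_div_div_cancel_right₀ (Nat.cast_ne_zero.2 hn) _ _)

theorem tendsto_log_mul_pow_div {s p : ℕ} (hs : s ≠ 0) (hp : p ≠ 0) :
    Tendsto (fun M : ℕ => log (s * p ^ (M + 1) : ℕ) / M) atTop (𝓝 (log p)) := by
  have h := (tendsto_const_div_atTop_nhds_zero_nat (log s)).add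
    ((tendsto_natCast_add_div_natCast 1).mul_const (log p))
  rw [zero_add, one_mul] at h
  refine h.congr fun M => ?_
  push_cast
  rw [log_mul (by positivity) (by positivity), log_pow]
  push_cast
  ring

end Asymptotics

section Weights

variable {p : ℕ} (N : Set ℕ)

theorem densCount_succ_le (n : ℕ) : densCount N (n + 1) ≤ densCount N n + 1 := by
  classical
  rw [densCount, densCount, Finset.range_add_one, Finset.filter_insert]
  split_ifs
  · exact Finset.card_insert_le _ _
  · exact Nat.le_succ _

theorem densCount_le (n : ℕ) : densCount N n ≤ n := by
  classical
  exact (Finset.card_filter_le _ _).trans (Finset.card_range n).le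

theorem natCast_sub_two_pos (hp : 3 ≤ p) : (0 : ℝ) < p - 2 :=
  sub_pos.2 (by exact_mod_cast hp)

theorem log_sub_two_lt_log (hp : 3 ≤ p) : log ((p : ℝ) - 2) < log p :=
  log_lt_log (natCast_sub_two_pos hp) (by linarith)

theorem log_sub_two_nonneg (hp : 3 ≤ p) : 0 ≤ log ((p : ℝ) - 2) :=
  log_nonneg (le_sub_iff_add_le.2 (by exact_mod_cast hp))

theorem epsWeight_pos (hp : 3 ≤ p) (m : ℕ) : 0 < epsWeight p N m := by
  have hp0 : (0 : ℝ) < p := by positivity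
  exact mul_pos (inv_pos.2 (pow_pos hp0 _))
    (inv_pos.2 (pow_pos (div_pos hp0 (natCast_sub_two_pos hp)) _))

theorem neg_log_epsWeight (hp : 3 ≤ p) (m : ℕ) :
    -log (epsWeight p N m) = (m + 1) * log p - densCount N (m + 1) * log (p - 2) := by
  classical
  have hp2 := natCast_sub_two_pos hp
  have hp0 : (0 : ℝ) < p := by positivity
  have hcard := Finset.card_filter_add_card_filter_not (s := Finset.range (m + 1)) (· ∈ N)
  rw [Finset.card_range] at hcard
  have hcard' :
      ((Finset.range (m + 1)).filter (· ∉ N)).card = (m + 1 : ℝ) - densCount N (m + 1) :=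
    eq_sub_of_add_eq' (by exact_mod_cast hcard)
  rw [epsWeight, log_mul (by positivity) (by positivity), log_inv, log_inv, log_pow, log_pow,
    log_div hp0.ne' hp2.ne', hcard']
  simp only [densCount]
  ring

theorem mul_log_le_neg_log_epsWeight (hp : 3 ≤ p) (m : ℕ) :
    (m + 1) * (log p - log (p - 2)) ≤ -log (epsWeight p N m) := by
  have hdc : (densCount N (m + 1) : ℝ) ≤ m + 1 := by exact_mod_cast densCount_le N (m + 1)
  rw [neg_log_epsWeight N hp]
  linarith [mul_le_mul_of_nonneg_right hdc (log_sub_two_nonneg hp)]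

theorem epsWeight_lt_one (hp : 3 ≤ p) (m : ℕ) : epsWeight p N m < 1 := by
  have h := mul_log_le_neg_log_epsWeight N hp m
  have hlog : 0 < (m + 1) * (log p - log (p - 2)) :=
    mul_pos (by positivity) (sub_pos.2 (log_sub_two_lt_log hp))
  exact (log_neg_iff (epsWeight_pos N hp m)).1 (by linarith)

theorem antitone_epsWeight (hp : 3 ≤ p) : Antitone (epsWeight p N) := by
  refine antitone_nat_of_succ_le fun m => ?_
  rw [← log_le_log_iff (epsWeight_pos N hp _) (epsWeight_pos N hp _), ← neg_le_neg_iff,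
    neg_log_epsWeight N hp, neg_log_epsWeight N hp]
  have hdc : (densCount N (m + 1 + 1) : ℝ) ≤ densCount N (m + 1) + 1 := by
    exact_mod_cast densCount_succ_le N (m + 1)
  push_cast
  linarith [mul_le_mul_of_nonneg_right hdc (log_sub_two_nonneg hp), log_sub_two_lt_log hp]

theorem tendsto_epsWeight_atTop (hp : 3 ≤ p) : Tendsto (epsWeight p N) atTop (𝓝 0) := by
  have hlin : Tendsto (fun m : ℕ => ((m : ℝ) + 1) * (log p - log (p - 2))) atTop atTop :=
    (tendsto_atTop_add_const_right _ 1 tendsto_natCast_atTop_atTop).atTop_mul_const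
      (sub_pos.2 (log_sub_two_lt_log hp))
  have hL := tendsto_atTop_mono (mul_log_le_neg_log_epsWeight N hp) hlin
  refine (tendsto_exp_neg_atTop_nhds_zero.comp hL).congr fun m => ?_
  simp [exp_log (epsWeight_pos N hp m)]

theorem tendsto_neg_log_epsWeight_div (hp : 3 ≤ p) {t : ℝ}
    (hN : Tendsto (fun n : ℕ => (densCount N n : ℝ) / n) atTop (𝓝 t)) (k : ℕ) :
    Tendsto (fun m : ℕ => -log (epsWeight p N (m + k)) / m) atTop
      (𝓝 (log p - t * log (p - 2))) := by
  have h := ((tendsto_natCast_add_div_natCast (k + 1)).mul_const (log p)).sub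
    ((hN.comp_add_div_natCast (k + 1)).mul_const (log (p - 2)))
  rw [one_mul] at h
  refine h.congr fun m => ?_
  rw [neg_log_epsWeight N hp]
  simp only [add_assoc]
  push_cast
  ring

theorem le_ultraDist_iff {A : ℕ → Type*} (hw : Antitone (epsWeight p N)) {M : ℕ} {ε : ℝ}
    (hε : ε ∈ Ioc (epsWeight p N (M + 1)) (epsWeight p N M)) {ξ η : ∀ n, A n} (hne : ξ ≠ η) :
    ε ≤ ultraDist p N ξ η ↔ (fun i : Fin (M + 1) => ξ i) ≠ fun i : Fin (M + 1) => η i := by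
  classical
  rw [ultraDist, dif_neg hne, hw.le_iff_le_of_mem_Ioc hε, Nat.find_le_iff]
  simp [funext_iff, Fin.exists_iff]

theorem sepCount_ultraDist {A : ℕ → Type*} [∀ n, Fintype (A n)] [∀ n, Nonempty (A n)]
    (hw : Antitone (epsWeight p N)) {M : ℕ} {ε : ℝ}
    (hε : ε ∈ Ioc (epsWeight p N (M + 1)) (epsWeight p N M)) :
    sepCount (univ : Set (∀ n, A n)) (ultraDist p N) ε =
      ((∏ i : Fin (M + 1), Fintype.card (A i) : ℕ) : ℝ≥0∞) := by
  rw [sepCount_univ_eq_card (surjective_restrict_fin (M + 1)) fun _ _ => le_ultraDist_iff N hw hε,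
    Fintype.card_pi]

end Weights

theorem prod_card_eq_mul_pow {A : ℕ → Type*} [∀ n, Fintype (A n)] {s p : ℕ}
    (hA0 : Fintype.card (A 0) = s * p) (hA : ∀ n, 1 ≤ n → Fintype.card (A n) = p) (M : ℕ) :
    ∏ i : Fin (M + 1), Fintype.card (A i) = s * p ^ (M + 1) := by
  have hsucc : ∀ i : Fin M, Fintype.card (A i.succ) = p := fun i => hA _ (by simp)
  rw [Fin.prod_univ_succ, Fin.val_zero, hA0, Fintype.prod_congr _ _ hsucc, Finset.prod_const,
    Finset.card_univ, Fintype.card_fin, pow_succ']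
  ring

/-- the box dimension of the product space `X = Π A_n` with respect to the
ultrametric `d_t` exists and equals `(1 - t·log(p-2)/log p)⁻¹`. -/
theorem stmt_12 (s p : ℕ) (hs : 1 ≤ s) (hp : 3 ≤ p)
    (A : ℕ → Type) [∀ n, Fintype (A n)]
    (hA0 : Fintype.card (A 0) = s * p) (hA : ∀ n, 1 ≤ n → Fintype.card (A n) = p)
    (t : ℝ) (ht : t ∈ Set.Icc (0 : ℝ) 1) (N : Set ℕ)
    (hN : Filter.Tendsto (fun n => (densCount N n : ℝ) / (n : ℝ)) Filter.atTop (nhds t)) :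
    Filter.Tendsto
      (fun ε => acRatio (Set.univ : Set ((n : ℕ) → A n)) (ultraDist p N) ε)
      (𝓝[>] (0 : ℝ))
      (nhds (((1 - t * Real.log ((p : ℝ) - 2) / Real.log (p : ℝ))⁻¹ : ℝ) : EReal)) := by
  set w := epsWeight p N
  set D := log p - t * log (p - 2)
  have hD : 0 < D := by
    linarith [mul_le_of_le_one_left (log_sub_two_nonneg hp) ht.2, log_sub_two_lt_log hp]
  have : ∀ n, Nonempty (A n) := fun n => Fintype.card_pos_iff.1 <| by
    rcases n with _ | n
    · rw [hA0]; exact Nat.mul_pos hs (by omega)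
    · rw [hA _ n.succ_pos]; omega
  set g : ℕ → ℝ := fun M => log (s * p ^ (M + 1) : ℕ)
  have hg : Tendsto (fun M : ℕ => g M / M) atTop (𝓝 (log p)) :=
    tendsto_log_mul_pow_div (by omega) (by omega)
  have hL₀ := tendsto_neg_log_epsWeight_div N hp hN 0
  simp only [add_zero] at hL₀
  have hratio : Tendsto (fun ε => g (scaleIndex w ε) / -log ε) (𝓝[>] 0) (𝓝 (log p / D)) :=
    tendsto_div_neg_log_scaleIndex (g := g) (antitone_epsWeight N hp) (epsWeight_pos N hp)
      (epsWeight_lt_one N hp) (tendsto_epsWeight_atTop N hp) (fun _ => log_natCast_nonneg _)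
      (tendsto_div_of_tendsto_div_natCast hg hL₀ hD.ne')
      (tendsto_div_of_tendsto_div_natCast hg (tendsto_neg_log_epsWeight_div N hp hN 1) hD.ne')
  have hsep : ∀ᶠ ε in 𝓝[>] (0 : ℝ),
      ((g (scaleIndex w ε) / -log ε : ℝ) : EReal) =
        acRatio (univ : Set (∀ n, A n)) (ultraDist p N) ε := by
    filter_upwards [Ioc_mem_nhdsGT (epsWeight_pos N hp 0)] with ε hε
    rw [acRatio, sepCount_ultraDist N (antitone_epsWeight N hp)
      (scaleIndex_mem_Ioc (tendsto_epsWeight_atTop N hp) hε), prod_card_eq_mul_pow hA0 hA,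
      eLog_natCast (by positivity), ← EReal.coe_mul, div_eq_mul_inv]
  have hlogp : log p ≠ 0 := (log_pos (by exact_mod_cast (by omega : 1 < p))).ne'
  rw [show 1 - t * log (p - 2) / log p = D / log p by field_simp; rfl, inv_div]
  exact ((continuous_coe_real_ereal.tendsto _).comp hratio).congr' hsep
end

section
/- Let G be a countably infinite group, H a compact metrizable topological group whose topology is induced by a left-invariant metric, with normalized Haar probability measure ν, and τ : G → H an injective group homomorphism with dense image. Then there exists a family (A(t))_{t∈[0,1]} of subsets of H such that A(0) = ∅, A(1) = H, each A(t) is compact with A(t) = closure(interior A(t)), ∂A(t) ∩ τ(G) = ∅, and ν(∂A(t)) = 0, and the path t ↦ A(t) is continuous with respect to the pseudometric D̄(A,B) = ν(closure(A Δ B)): for every ε > 0 there is δ > 0 such that |t−s| < δ implies ν(closure(A(t) Δ A(s))) < ε. -/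
open MeasureTheory Filter Set Topology
open scoped symmDiff ENNReal

/-! Windows are built as in the proof of Urysohn's lemma. A dyadic family `W n i`
(`0 ≤ i ≤ 2 ^ n`) of proper, generic, regular windows, increasing in `i`, is refined level by
level: between two consecutive windows one inserts a finite union of small closed balls whose
spheres are null and whose radii avoid the countably many distances to points of `τ(G)`; this cuts
every measure gap by the factor `2/3`. Small balls have small measure because a Haar measure on an
infinite compact group has no atoms. Enumerating `τ(G)` as `e 0, e 1, …`, the windows inserted after
stage `k` contain `e k` only if the window below them does, so `e k` enters the family at a
definite dyadic time and lies in the interior of the window there. The path is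
`t ↦ closure (interior (⋂_{i/2^n > t} W n i))`; its measure gaps are bounded by the dyadic gaps
`(2/3) ^ n`. -/

theorem IsClosed.frontier_closure_interior_subset {X : Type*} [TopologicalSpace X] {M : Set X}
    (hM : IsClosed M) : frontier (closure (interior M)) ⊆ M \ interior M := by
  rw [isClosed_closure.frontier_eq]
  exact sdiff_subset_sdiff hM.closure_interior_subset isOpen_interior.subset_interior_closure

theorem IsClosed.closure_symmDiff_closure_interior_subset {X : Type*} [TopologicalSpace X]
    {M N : Set X} (hM : IsClosed M) (hNM : N ⊆ M) :
    closure (closure (interior M) ∆ closure (interior N)) ⊆ M \ interior N := by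
  rw [symmDiff_of_ge (closure_mono (interior_mono hNM))]
  refine closure_minimal ?_ (hM.sdiff isOpen_interior)
  exact sdiff_subset_sdiff hM.closure_interior_subset subset_closure

theorem nhdsNE_one_neBot_of_infinite {G : Type*} [Group G] [TopologicalSpace G]
    [IsTopologicalGroup G] [CompactSpace G] [Infinite G] : (𝓝[≠] (1 : G)).NeBot := by
  refine ⟨fun h => ?_⟩
  have := discreteTopology_of_isOpen_singleton_one ((isOpen_singleton_iff_punctured_nhds 1).2 h)
  have := finite_of_compact_of_discrete (X := G)
  exact not_finite G

section GoodWindow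

variable {X : Type*} [TopologicalSpace X] [MeasurableSpace X] {μ : Measure X} {C : Set X}

/-- A proper, `C`-generic, `μ`-regular window; for closed `W`, `mem_interior` says that
`frontier W ∩ C = ∅`. -/
structure IsGoodWindow (μ : Measure X) (C : Set X) (W : Set X) : Prop where
  isClosed : IsClosed W
  closure_interior : closure (interior W) = W
  measure_frontier : μ (frontier W) = 0
  mem_interior : ∀ c ∈ C, c ∈ W → c ∈ interior W

theorem isGoodWindow_empty : IsGoodWindow μ C ∅ :=
  ⟨isClosed_empty, by simp, by simp, by simp⟩

theorem isGoodWindow_univ : IsGoodWindow μ C univ :=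
  ⟨isClosed_univ, by simp, by simp, by simp⟩

theorem IsOpen.isGoodWindow_closure {U : Set X} (hU : IsOpen U) (hμ : μ (frontier U) = 0)
    (hC : ∀ c ∈ C, c ∉ frontier U) : IsGoodWindow μ C (closure U) where
  isClosed := isClosed_closure
  closure_interior :=
    isClosed_closure.closure_interior_subset.antisymm (closure_mono hU.subset_interior_closure)
  measure_frontier := measure_mono_null frontier_closure_subset hμ
  mem_interior c hc hcU := hU.subset_interior_closure <| by
    by_contra h
    exact hC c hc ⟨hcU, by rwa [hU.interior_eq]⟩

theorem IsGoodWindow.union {V W : Set X} (hV : IsGoodWindow μ C V) (hW : IsGoodWindow μ C W) :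
    IsGoodWindow μ C (V ∪ W) where
  isClosed := hV.isClosed.union hW.isClosed
  closure_interior := by
    refine (hV.isClosed.union hW.isClosed).closure_interior_subset.antisymm ?_
    calc V ∪ W = closure (interior V ∪ interior W) := by
          rw [closure_union, hV.closure_interior, hW.closure_interior]
      _ ⊆ closure (interior (V ∪ W)) := closure_mono subset_interior_union
  measure_frontier :=
    measure_mono_null ((frontier_union_subset V W).trans
      (union_subset_union inter_subset_left inter_subset_right))
      (measure_union_null hV.measure_frontier hW.measure_frontier)
  mem_interior c hc := by
    rintro (h | h)
    · exact interior_mono subset_union_left (hV.mem_interior c hc h)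
    · exact interior_mono subset_union_right (hW.mem_interior c hc h)

theorem isGoodWindow_biUnion_finset {ι : Type*} (s : Finset ι) {W : ι → Set X}
    (hW : ∀ i ∈ s, IsGoodWindow μ C (W i)) : IsGoodWindow μ C (⋃ i ∈ s, W i) := by
  classical
  induction s using Finset.induction_on with
  | empty => simpa using isGoodWindow_empty
  | insert i s _ ih =>
    rw [Finset.set_biUnion_insert]
    exact (hW i (Finset.mem_insert_self i s)).union
      (ih fun j hj => hW j (Finset.mem_insert_of_mem hj))

theorem IsGoodWindow.measureReal_diff_interior [IsFiniteMeasure μ] {W : Set X}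
    (hW : IsGoodWindow μ C W) : μ.real (W \ interior W) = 0 := by
  rw [← hW.isClosed.frontier_eq, measureReal_eq_zero_iff]
  exact hW.measure_frontier

end GoodWindow

theorem exists_subset_measureReal_biUnion_mem_Ioc {X ι : Type*} [MeasurableSpace X]
    (μ : Measure X) [IsFiniteMeasure μ] (s : Finset ι) (B : ι → Set X) {a η : ℝ} (ha : 0 ≤ a)
    (hB : ∀ i ∈ s, μ.real (B i) ≤ η) (hs : a < μ.real (⋃ i ∈ s, B i)) :
    ∃ t ⊆ s, μ.real (⋃ i ∈ t, B i) ∈ Ioc a (a + η) := by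
  classical
  induction s using Finset.induction_on with
  | empty => simp at hs; linarith
  | insert i s _ ih =>
    by_cases has : a < μ.real (⋃ j ∈ s, B j)
    · obtain ⟨t, hts, ht⟩ := ih (fun j hj => hB j (Finset.mem_insert_of_mem hj)) has
      exact ⟨t, hts.trans (Finset.subset_insert i s), ht⟩
    · refine ⟨insert i s, subset_rfl, hs, ?_⟩
      rw [Finset.set_biUnion_insert]
      linarith [measureReal_union_le (μ := μ) (B i) (⋃ j ∈ s, B j),
        hB i (Finset.mem_insert_self i s)]

section Metric

open Metric

variable {X : Type*} [MetricSpace X] [MeasurableSpace X] [BorelSpace X] {μ : Measure X}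
  {C : Set X}

/-- Only countably many radii are excluded: those of spheres of positive measure and the
distances from `x` to points of `C`. -/
theorem exists_isGoodWindow_closure_ball [IsFiniteMeasure μ] [NullSingletonClass μ]
    (hC : C.Countable) (x : X) {ε η : ℝ} (hε : 0 < ε) (hη : 0 < η) :
    ∃ r ∈ Ioo 0 ε, IsGoodWindow μ C (closure (ball x r)) ∧ μ.real (closure (ball x r)) < η := by
  have hbad : ({r | 0 < μ {y | dist y x = r}} ∪ (fun c => dist c x) '' C).Countable :=
    (Measure.countable_meas_level_set_pos (continuous_id.dist continuous_const).measurable).union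
      (hC.image _)
  have hsmall : ∀ᶠ r in 𝓝 (0 : ℝ), μ (cthickening r {x}) < ENNReal.ofReal η := by
    have h := tendsto_measure_cthickening (μ := μ) (s := {x}) ⟨1, one_pos, measure_ne_top _ _⟩
    rw [closure_singleton, measure_singleton] at h
    exact h.eventually (gt_mem_nhds (ENNReal.ofReal_pos.2 hη))
  obtain ⟨δ, hδ, hδsmall⟩ := Metric.eventually_nhds_iff.1 hsmall
  obtain ⟨r, hr, hr0, hrεδ⟩ := (hbad.dense_compl ℝ).exists_between (lt_min hε hδ)
  simp only [mem_compl_iff, mem_union, mem_ofPred_eq, mem_image, not_or, not_lt,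
    nonpos_iff_eq_zero, not_exists, not_and] at hr
  refine ⟨r, ⟨hr0, hrεδ.trans_le (min_le_left _ _)⟩, ?_, ?_⟩
  · exact isOpen_ball.isGoodWindow_closure (measure_mono_null frontier_ball_subset_sphere hr.1)
      fun c hc hfr => hr.2 c hc (frontier_ball_subset_sphere hfr)
  · have hrδ : dist r 0 < δ := by
      rw [Real.dist_0_eq_abs, abs_of_pos hr0]; exact hrεδ.trans_le (min_le_right _ _)
    have h := hδsmall hrδ
    rw [cthickening_singleton x hr0.le] at h
    exact (measureReal_mono closure_ball_subset_closedBall).trans_lt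
      ((ENNReal.lt_ofReal_iff_toReal_lt (measure_ne_top _ _)).1 h)

/-- Inner regularity gives a closed, hence compact, part of `U`, covered by finitely many small
good balls; adding them one at a time, the measure crosses `a` in a step of size at most `η`. -/
theorem IsOpen.exists_isGoodWindow_subset_measureReal_mem_Ioc [CompactSpace X] [IsFiniteMeasure μ]
    [NullSingletonClass μ] (hC : C.Countable) {U : Set X} (hU : IsOpen U) {a η : ℝ}
    (ha : 0 ≤ a) (hη : 0 < η) (haU : a < μ.real U) :
    ∃ K ⊆ U, IsGoodWindow μ C K ∧ μ.real K ∈ Ioc a (a + η) := by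
  obtain ⟨F, hFU, hF, haF⟩ := hU.exists_lt_isClosed (μ := μ)
    ((ENNReal.ofReal_lt_iff_lt_toReal ha (measure_ne_top _ _)).2 haU)
  have hball : ∀ x ∈ F, ∃ r, 0 < r ∧ closure (ball x r) ⊆ U ∧
      IsGoodWindow μ C (closure (ball x r)) ∧ μ.real (closure (ball x r)) ≤ η := by
    intro x hx
    obtain ⟨ε, hε, hεU⟩ := Metric.isOpen_iff.1 hU x (hFU hx)
    obtain ⟨r, hr, hgood, hsmall⟩ := exists_isGoodWindow_closure_ball (μ := μ) hC x hε hη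
    exact ⟨r, hr.1, closure_ball_subset_closedBall.trans
      ((closedBall_subset_ball hr.2).trans hεU), hgood, hsmall.le⟩
  choose! r hr0 hrU hrgood hrsmall using hball
  obtain ⟨t, htF, hFt⟩ := hF.isCompact.elim_nhds_subcover (fun x => ball x (r x))
    fun x hx => ball_mem_nhds x (hr0 x hx)
  have haF' : a < μ.real (⋃ x ∈ t, closure (ball x (r x))) :=
    ((ENNReal.ofReal_lt_iff_lt_toReal ha (measure_ne_top _ _)).1 haF).trans_le
      (measureReal_mono (hFt.trans (iUnion₂_mono fun _ _ => subset_closure)) (measure_ne_top _ _))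
  obtain ⟨t', ht't, ht'a⟩ := exists_subset_measureReal_biUnion_mem_Ioc μ t
    (fun x => closure (ball x (r x))) ha (fun x hx => hrsmall x (htF x hx)) haF'
  exact ⟨_, iUnion₂_subset fun x hx => hrU x (htF x (ht't hx)),
    isGoodWindow_biUnion_finset t' fun x hx => hrgood x (htF x (ht't hx)), ht'a⟩

/-- The inserted window is `L ∪ K` with `K ⊆ interior U \ (L ∪ P)` carrying between one and two
thirds of the gap. -/
theorem IsGoodWindow.exists_between [CompactSpace X] [IsFiniteMeasure μ] [NullSingletonClass μ]
    (hC : C.Countable) {L U : Set X} (hL : IsGoodWindow μ C L) (hU : IsGoodWindow μ C U)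
    (hLU : L ⊆ U) {P : Set X} (hP : P.Finite) :
    ∃ V, IsGoodWindow μ C V ∧ L ⊆ V ∧ V ⊆ U ∧ μ.real (V \ L) ≤ 2 / 3 * μ.real (U \ L) ∧
      μ.real (U \ V) ≤ 2 / 3 * μ.real (U \ L) ∧ ∀ p ∈ P, p ∈ V → p ∈ L := by
  set O := interior U \ (L ∪ P)
  have hO : IsOpen O := isOpen_interior.sdiff (hL.isClosed.union hP.isClosed)
  have hOUL : O ⊆ U \ L := fun x hx => ⟨interior_subset hx.1, fun h => hx.2 (Or.inl h)⟩
  have hULO : μ.real (U \ L) ≤ μ.real O := by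
    have hcover : U \ L ⊆ O ∪ (U \ interior U ∪ P) := by
      rintro x ⟨hxU, hxL⟩
      by_cases hxP : x ∈ P
      · exact Or.inr (Or.inr hxP)
      by_cases hxi : x ∈ interior U
      · exact Or.inl ⟨hxi, by simp [hxL, hxP]⟩
      · exact Or.inr (Or.inl ⟨hxU, hxi⟩)
    have hnull : μ.real (U \ interior U ∪ P) = 0 :=
      measureReal_union_null hU.measureReal_diff_interior
        ((measureReal_eq_zero_iff).2 (hP.countable.measure_zero μ))
    linarith [measureReal_mono hcover (μ := μ), measureReal_union_le (μ := μ) O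
      (U \ interior U ∪ P)]
  have hOUL' : μ.real O ≤ μ.real (U \ L) := measureReal_mono hOUL
  rcases measureReal_nonneg.eq_or_lt with hO0 | hOpos
  · refine ⟨L, hL, subset_rfl, hLU, by simp, ?_, fun p _ hp => hp⟩
    linarith
  obtain ⟨K, hKO, hK, hK₁, hK₂⟩ := hO.exists_isGoodWindow_subset_measureReal_mem_Ioc (μ := μ) hC
    (a := μ.real O / 3) (η := μ.real O / 3) (by positivity) (by positivity) (by linarith [hOpos])
  have hKUL : K ⊆ U \ L := hKO.trans hOUL
  refine ⟨L ∪ K, hL.union hK, subset_union_left, union_subset hLU (hKUL.trans sdiff_subset),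
    ?_, ?_, fun p hp hpV => hpV.resolve_right fun hpK => (hKO hpK).2 (Or.inr hp)⟩
  · rw [union_sdiff_left, sdiff_eq_left.2 (disjoint_left.2 fun x hxK hxL => (hKUL hxK).2 hxL)]
    linarith
  · rw [← Set.sdiff_sdiff, measureReal_sdiff hKUL hK.isClosed.measurableSet]
    linarith

end Metric

section Dyadic

variable {X : Type*} [TopologicalSpace X] [MeasurableSpace X] {μ : Measure X}

structure IsDyadicLevel (μ : Measure X) (C : Set X) (n : ℕ) (W : ℕ → Set X) : Prop where
  apply_zero : W 0 = ∅
  apply_two_pow : W (2 ^ n) = univ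
  mono : Monotone W
  isGoodWindow : ∀ i, IsGoodWindow μ C (W i)
  measureReal_diff_le : ∀ i, μ.real (W (i + 1) \ W i) ≤ (2 / 3) ^ n

structure IsDyadicRefinement (P : Set X) (W W' : ℕ → Set X) : Prop where
  apply_two_mul : ∀ i, W' (2 * i) = W i
  mem_of_mem_odd : ∀ p ∈ P, ∀ i, p ∈ W' (2 * i + 1) → p ∈ W i

theorem isDyadicLevel_zero [IsProbabilityMeasure μ] {C : Set X} :
    IsDyadicLevel μ C 0 fun i => if i = 0 then ∅ else univ where
  apply_zero := if_pos rfl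
  apply_two_pow := if_neg one_ne_zero
  mono i j hij := by
    by_cases hi : i = 0
    · simp [hi]
    · simp [hi, show j ≠ 0 by omega]
  isGoodWindow i := by
    split_ifs
    exacts [isGoodWindow_empty, isGoodWindow_univ]
  measureReal_diff_le _ := by rw [pow_zero]; exact measureReal_le_one

structure IsDyadicChain (μ : Measure X) (e : ℕ → X) (W : ℕ → ℕ → Set X) : Prop where
  level : ∀ n, IsDyadicLevel μ (range e) n (W n)
  refinement : ∀ n, IsDyadicRefinement (e '' Iic n) (W n) (W (n + 1))

end Dyadic

theorem IsDyadicLevel.exists_refinement {X : Type*} [MetricSpace X] [MeasurableSpace X]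
    [BorelSpace X] [CompactSpace X] {μ : Measure X} [IsFiniteMeasure μ] [NullSingletonClass μ]
    {C : Set X} (hC : C.Countable) {n : ℕ} {W : ℕ → Set X} (hW : IsDyadicLevel μ C n W)
    {P : Set X} (hP : P.Finite) :
    ∃ W', IsDyadicLevel μ C (n + 1) W' ∧ IsDyadicRefinement P W W' := by
  choose V hV hWV hVW hV₁ hV₂ hVP using fun i => (hW.isGoodWindow i).exists_between hC
    (hW.isGoodWindow (i + 1)) (hW.mono i.le_succ) hP
  set W' : ℕ → Set X := fun j => if Even j then W (j / 2) else V (j / 2)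
  have heven (i : ℕ) : W' (2 * i) = W i := by simp [W']
  have hodd (i : ℕ) : W' (2 * i + 1) = V i := by
    simp [W', show (2 * i + 1) / 2 = i by omega]
  have hsucc (i : ℕ) : 2 * i + 1 + 1 = 2 * (i + 1) := by ring
  refine ⟨W', ⟨?_, ?_, ?_, fun j => ?_, fun j => ?_⟩, heven, fun p hp i h => hVP i p hp ?_⟩
  · exact (heven 0).trans hW.apply_zero
  · rw [pow_succ', heven, hW.apply_two_pow]
  · refine monotone_nat_of_le_succ fun j => ?_
    obtain ⟨i, rfl | rfl⟩ := Nat.even_or_odd' j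
    · rw [heven, hodd]; exact hWV i
    · rw [hodd, hsucc, heven]; exact hVW i
  · obtain ⟨i, rfl | rfl⟩ := Nat.even_or_odd' j
    · rw [heven]; exact hW.isGoodWindow i
    · rw [hodd]; exact hV i
  · rw [pow_succ']
    obtain ⟨i, rfl | rfl⟩ := Nat.even_or_odd' j
    · rw [heven, hodd]
      exact (hV₁ i).trans (by gcongr; exact hW.measureReal_diff_le i)
    · rw [hodd, hsucc, heven]
      exact (hV₂ i).trans (by gcongr; exact hW.measureReal_diff_le i)
  · rwa [← hodd]

theorem exists_isDyadicChain {X : Type*} [MetricSpace X] [MeasurableSpace X] [BorelSpace X]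
    [CompactSpace X] (μ : Measure X) [IsProbabilityMeasure μ] [NullSingletonClass μ]
    (e : ℕ → X) : ∃ W, IsDyadicChain μ e W := by
  choose! next hnext using fun n (V : ℕ → Set X) (hV : IsDyadicLevel μ (range e) n V) =>
    hV.exists_refinement (countable_range e) ((finite_Iic n).image e)
  let W : ℕ → ℕ → Set X := fun n =>
    Nat.rec (motive := fun _ => ℕ → Set X) (fun i => if i = 0 then ∅ else univ) next n
  have hW (n : ℕ) : IsDyadicLevel μ (range e) n (W n) := by
    induction n with
    | zero => exact isDyadicLevel_zero
    | succ n ih => exact (hnext n (W n) ih).1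
  exact ⟨W, hW, fun n => (hnext n (W n) (hW n)).2⟩

section Envelope

variable {X : Type*} {W : ℕ → ℕ → Set X}

def upperEnvelope (W : ℕ → ℕ → Set X) (t : ℝ) : Set X :=
  ⋂ (n : ℕ) (i : ℕ) (_ : t < (i : ℝ) / 2 ^ n), W n i

theorem upperEnvelope_subset {t : ℝ} {n i : ℕ} (h : t < (i : ℝ) / 2 ^ n) :
    upperEnvelope W t ⊆ W n i :=
  (iInter_subset _ n).trans ((iInter_subset _ i).trans (iInter_subset _ h))

theorem upperEnvelope_mono : Monotone (upperEnvelope W) := by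
  intro s t hst x hx
  simp only [upperEnvelope, mem_iInter] at hx ⊢
  exact fun n i h => hx n i (hst.trans_lt h)

end Envelope

namespace IsDyadicChain

variable {X : Type*} [TopologicalSpace X] [MeasurableSpace X] {μ : Measure X} {e : ℕ → X}
  {W : ℕ → ℕ → Set X}

theorem apply_add_two_pow_mul (hW : IsDyadicChain μ e W) (n k i : ℕ) :
    W (n + k) (2 ^ k * i) = W n i := by
  induction k with
  | zero => simp
  | succ k ih =>
    rw [← add_assoc, pow_succ', mul_assoc, (hW.refinement (n + k)).apply_two_mul, ih]

theorem subset_of_div_le (hW : IsDyadicChain μ e W) {n i m j : ℕ}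
    (h : (i : ℝ) / 2 ^ n ≤ j / 2 ^ m) : W n i ⊆ W m j := by
  rw [div_le_div_iff₀ (by positivity) (by positivity)] at h
  have h' : 2 ^ m * i ≤ 2 ^ n * j := by rw [mul_comm, mul_comm _ j]; exact_mod_cast h
  rw [← hW.apply_add_two_pow_mul n m i, ← hW.apply_add_two_pow_mul m n j, add_comm m n]
  exact (hW.level (n + m)).mono h'

theorem eq_univ (hW : IsDyadicChain μ e W) {n i : ℕ} (h : 2 ^ n ≤ i) : W n i = univ :=
  univ_subset_iff.1 ((hW.level n).apply_two_pow ▸ (hW.level n).mono h)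

theorem mem_of_mem_succ (hW : IsDyadicChain μ e W) {k n j : ℕ} (hk : k ≤ n)
    (h : e k ∈ W (n + 1) j) : e k ∈ W n (j / 2) := by
  obtain ⟨i, rfl | rfl⟩ := Nat.even_or_odd' j
  · rw [(hW.refinement n).apply_two_mul] at h
    simpa using h
  · rw [show (2 * i + 1) / 2 = i by omega]
    exact (hW.refinement n).mem_of_mem_odd _ ⟨k, hk, rfl⟩ i h

theorem mem_of_mem_add (hW : IsDyadicChain μ e W) {k m j : ℕ} (h : e k ∈ W (k + m) j) :
    e k ∈ W k (j / 2 ^ m) := by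
  induction m generalizing j with
  | zero => simpa using h
  | succ m ih =>
    rw [pow_succ', ← Nat.div_div_eq_div_mul]
    exact ih (hW.mem_of_mem_succ (Nat.le_add_right k m) h)

theorem measureReal_diff_interior_le [IsFiniteMeasure μ] (hW : IsDyadicChain μ e W) (n i : ℕ) :
    μ.real (W n (i + 2) \ interior (W n i)) ≤ 2 * (2 / 3) ^ n := by
  have hl := hW.level n
  have hcover : W n (i + 2) \ interior (W n i) ⊆
      (W n (i + 1 + 1) \ W n (i + 1) ∪ W n (i + 1) \ W n i) ∪ W n i \ interior (W n i) := by
    intro x ⟨hx, hxi⟩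
    by_cases h1 : x ∈ W n (i + 1)
    · by_cases h0 : x ∈ W n i
      · exact Or.inr ⟨h0, hxi⟩
      · exact Or.inl (Or.inr ⟨h1, h0⟩)
    · exact Or.inl (Or.inl ⟨hx, h1⟩)
  calc μ.real (W n (i + 2) \ interior (W n i))
      ≤ μ.real (W n (i + 1 + 1) \ W n (i + 1)) + μ.real (W n (i + 1) \ W n i)
        + μ.real (W n i \ interior (W n i)) :=
        (measureReal_mono hcover).trans
          ((measureReal_union_le _ _).trans (add_le_add_left (measureReal_union_le _ _) _))
    _ ≤ (2 / 3) ^ n + (2 / 3) ^ n + 0 := by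
        gcongr
        exacts [hl.measureReal_diff_le _, hl.measureReal_diff_le _,
          ((hl.isGoodWindow i).measureReal_diff_interior).le]
    _ = 2 * (2 / 3) ^ n := by ring

theorem subset_upperEnvelope (hW : IsDyadicChain μ e W) {t : ℝ} {n i : ℕ}
    (h : (i : ℝ) / 2 ^ n ≤ t) : W n i ⊆ upperEnvelope W t := by
  simp only [upperEnvelope, subset_iInter_iff]
  exact fun m j hj => hW.subset_of_div_le (h.trans hj.le)

theorem isClosed_upperEnvelope (hW : IsDyadicChain μ e W) (t : ℝ) :
    IsClosed (upperEnvelope W t) :=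
  isClosed_iInter fun n => isClosed_iInter fun i => isClosed_iInter fun _ =>
    ((hW.level n).isGoodWindow i).isClosed

theorem upperEnvelope_one (hW : IsDyadicChain μ e W) : upperEnvelope W 1 = univ := by
  refine eq_univ_of_forall fun x => ?_
  simp only [upperEnvelope, mem_iInter]
  intro n i h
  rw [one_lt_div (by positivity)] at h
  rw [hW.eq_univ (by exact_mod_cast h.le)]
  trivial

theorem measure_upperEnvelope_zero [IsFiniteMeasure μ] (hW : IsDyadicChain μ e W) :
    μ (upperEnvelope W 0) = 0 := by
  rw [← measureReal_eq_zero_iff]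
  refine le_antisymm (ge_of_tendsto' (tendsto_pow_atTop_nhds_zero_of_lt_one
    (by norm_num : (0 : ℝ) ≤ 2 / 3) (by norm_num)) fun n => ?_) measureReal_nonneg
  calc μ.real (upperEnvelope W 0) ≤ μ.real (W n 1 \ W n 0) := by
        rw [(hW.level n).apply_zero, sdiff_empty]
        exact measureReal_mono (upperEnvelope_subset (by simp))
    _ ≤ (2 / 3) ^ n := (hW.level n).measureReal_diff_le 0

theorem upperEnvelope_diff_interior_subset (hW : IsDyadicChain μ e W) {s t : ℝ} {n : ℕ}
    (hs : 0 ≤ s) (hts : t < s + 1 / 2 ^ n) :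
    upperEnvelope W t \ interior (upperEnvelope W s) ⊆
      W n (⌊s * 2 ^ n⌋₊ + 2) \ interior (W n ⌊s * 2 ^ n⌋₊) := by
  have h2n : (0 : ℝ) < 2 ^ n := by positivity
  refine sdiff_subset_sdiff (upperEnvelope_subset ?_) (interior_mono (hW.subset_upperEnvelope ?_))
  · have hfloor := Nat.lt_floor_add_one (s * 2 ^ n)
    have hts' : t * 2 ^ n < s * 2 ^ n + 1 := by
      calc t * 2 ^ n < (s + 1 / 2 ^ n) * 2 ^ n := by gcongr
        _ = s * 2 ^ n + 1 := by field_simp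
    rw [lt_div_iff₀ h2n]
    push_cast
    linarith
  · rw [div_le_iff₀ h2n]
    exact Nat.floor_le (by positivity)

theorem measureReal_upperEnvelope_diff_interior_le [IsFiniteMeasure μ] (hW : IsDyadicChain μ e W)
    {s t : ℝ} {n : ℕ} (hs : 0 ≤ s) (hts : t < s + 1 / 2 ^ n) :
    μ.real (upperEnvelope W t \ interior (upperEnvelope W s)) ≤ 2 * (2 / 3) ^ n :=
  (measureReal_mono (hW.upperEnvelope_diff_interior_subset hs hts)).trans
    (hW.measureReal_diff_interior_le n _)

theorem exists_measureReal_upperEnvelope_diff_interior_lt [IsFiniteMeasure μ]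
    (hW : IsDyadicChain μ e W) {ε : ℝ} (hε : 0 < ε) :
    ∃ δ > 0, ∀ s t, 0 ≤ s → t < s + δ →
      μ.real (upperEnvelope W t \ interior (upperEnvelope W s)) < ε := by
  obtain ⟨n, hn⟩ := exists_pow_lt_of_lt_one (half_pos hε) (by norm_num : (2 / 3 : ℝ) < 1)
  exact ⟨1 / 2 ^ n, by positivity, fun s t hs hts =>
    (hW.measureReal_upperEnvelope_diff_interior_le hs hts).trans_lt (by linarith)⟩

theorem measure_upperEnvelope_diff_interior [IsFiniteMeasure μ] (hW : IsDyadicChain μ e W)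
    {t : ℝ} (ht : 0 ≤ t) : μ (upperEnvelope W t \ interior (upperEnvelope W t)) = 0 := by
  rw [← measureReal_eq_zero_iff]
  refine le_antisymm (le_of_forall_pos_lt_add fun ε hε => ?_) measureReal_nonneg
  obtain ⟨δ, hδ, h⟩ := hW.exists_measureReal_upperEnvelope_diff_interior_lt hε
  simpa using h t t ht (by linarith)

/-- If `e k` first enters the `k`-th level at `W k i` and `t < i / 2 ^ k`, then it lies in a window
`W (k + m) (i * 2 ^ m - 1)` still above `t`, and protection pushes it down into `W k (i - 1)`. -/
theorem mem_interior_upperEnvelope (hW : IsDyadicChain μ e W) {k : ℕ} {t : ℝ}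
    (h : e k ∈ upperEnvelope W t) : e k ∈ interior (upperEnvelope W t) := by
  classical
  have hex : ∃ i, e k ∈ W k i := ⟨2 ^ k, by rw [hW.eq_univ le_rfl]; trivial⟩
  set i := Nat.find hex
  have hi : e k ∈ W k i := Nat.find_spec hex
  suffices hit : (i : ℝ) / 2 ^ k ≤ t from interior_mono (hW.subset_upperEnvelope hit)
    (((hW.level k).isGoodWindow i).mem_interior _ (mem_range_self k) hi)
  by_contra! hti
  have hi0 : 1 ≤ i := Nat.one_le_iff_ne_zero.2 fun h0 => by
    simp [h0, (hW.level k).apply_zero] at hi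
  obtain ⟨m, hm⟩ := exists_pow_lt_of_lt_one (sub_pos.2 hti) (by norm_num : (1 / 2 : ℝ) < 1)
  have hpm : 1 ≤ 2 ^ m := Nat.one_le_two_pow
  have hip : 1 ≤ i * 2 ^ m := one_le_mul hi0 hpm
  have hlt : t < ((i * 2 ^ m - 1 : ℕ) : ℝ) / 2 ^ (k + m) := by
    have hle : (1 : ℝ) / 2 ^ (k + m) ≤ (1 / 2) ^ m := by
      rw [one_div_pow]
      exact one_div_le_one_div_of_le (by positivity) (pow_le_pow_right₀ one_le_two le_add_self)
    have heq : ((i * 2 ^ m - 1 : ℕ) : ℝ) / 2 ^ (k + m) = i / 2 ^ k - 1 / 2 ^ (k + m) := by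
      rw [Nat.cast_sub hip]
      push_cast
      field_simp
      ring
    linarith
  have hmem := hW.mem_of_mem_add (upperEnvelope_subset hlt h)
  have hdiv : (i * 2 ^ m - 1) / 2 ^ m = i - 1 := by
    refine Nat.div_eq_of_lt_le ?_ ?_
    · rw [Nat.sub_mul, one_mul]; omega
    · rw [Nat.sub_add_cancel hi0]; omega
  rw [hdiv] at hmem
  exact Nat.find_min hex (by omega) hmem

end IsDyadicChain

theorem exists_continuous_path_of_good_windows {X : Type*} [MetricSpace X] [MeasurableSpace X]
    [BorelSpace X] [CompactSpace X] (μ : Measure X) [IsProbabilityMeasure μ] [NullSingletonClass μ]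
    [μ.IsOpenPosMeasure] (e : ℕ → X) :
    ∃ A : ℝ → Set X,
      A 0 = ∅ ∧ A 1 = Set.univ ∧
      (∀ t ∈ Set.Icc (0 : ℝ) 1, IsCompact (A t) ∧ A t = closure (interior (A t)) ∧
        frontier (A t) ∩ Set.range e = ∅ ∧ μ (frontier (A t)) = 0) ∧
      (∀ ε > (0 : ℝ), ∃ δ > (0 : ℝ), ∀ t ∈ Set.Icc (0 : ℝ) 1, ∀ s ∈ Set.Icc (0 : ℝ) 1,
        |t - s| < δ → (μ (closure (A t ∆ A s))).toReal < ε) := by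
  obtain ⟨W, hW⟩ := exists_isDyadicChain μ e
  refine ⟨fun t => closure (interior (upperEnvelope W t)), ?_, ?_, fun t ht => ?_, fun ε hε => ?_⟩
  · simp [μ.interior_eq_empty_of_null hW.measure_upperEnvelope_zero]
  · simp [hW.upperEnvelope_one]
  · have hfr := (hW.isClosed_upperEnvelope t).frontier_closure_interior_subset
    refine ⟨isClosed_closure.isCompact, closure_interior_idem.symm, ?_,
      measure_mono_null hfr (hW.measure_upperEnvelope_diff_interior ht.1)⟩
    refine eq_empty_iff_forall_notMem.2 ?_
    rintro _ ⟨hx, k, rfl⟩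
    exact (hfr hx).2 (hW.mem_interior_upperEnvelope (hfr hx).1)
  · obtain ⟨δ, hδ, hδε⟩ := hW.exists_measureReal_upperEnvelope_diff_interior_lt hε
    have hsymmDiff (s t : ℝ) (hs : 0 ≤ s) (hst : s ≤ t) (hts : |t - s| < δ) :
        μ.real (closure (closure (interior (upperEnvelope W t)) ∆
          closure (interior (upperEnvelope W s)))) < ε :=
      (measureReal_mono ((hW.isClosed_upperEnvelope t).closure_symmDiff_closure_interior_subset
        (upperEnvelope_mono hst))).trans_lt (hδε s t hs (by linarith [(abs_lt.1 hts).2]))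
    refine ⟨δ, hδ, fun t ht s hs hts => ?_⟩
    rcases le_total s t with hst | hts'
    · exact hsymmDiff s t hs.1 hst hts
    · rw [symmDiff_comm]
      exact hsymmDiff t s ht.1 hts' (by rwa [abs_sub_comm])

theorem stmt_15_general {G : Type*} [Group G] [Countable G] [Infinite G]
    {H : Type*} [Group H] [MetricSpace H] [IsTopologicalGroup H] [CompactSpace H]
    [MeasurableSpace H] [BorelSpace H]
    (ν : Measure H) [ν.IsHaarMeasure] [IsProbabilityMeasure ν]
    (τ : G →* H) (hinj : Function.Injective ⇑τ) :
    ∃ A : ℝ → Set H,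
      A 0 = ∅ ∧ A 1 = Set.univ ∧
      (∀ t ∈ Set.Icc (0 : ℝ) 1, IsCompact (A t) ∧ A t = closure (interior (A t)) ∧
        frontier (A t) ∩ Set.range ⇑τ = ∅ ∧ ν (frontier (A t)) = 0) ∧
      (∀ ε > (0 : ℝ), ∃ δ > (0 : ℝ), ∀ t ∈ Set.Icc (0 : ℝ) 1, ∀ s ∈ Set.Icc (0 : ℝ) 1,
        |t - s| < δ → (ν (closure (A t ∆ A s))).toReal < ε) := by
  have : Infinite H := .of_injective τ hinj
  have : (𝓝[≠] (1 : H)).NeBot := nhdsNE_one_neBot_of_infinite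
  obtain ⟨g, hg⟩ := exists_surjective_nat G
  have hrange : range (τ ∘ g) = range τ := by rw [range_comp, hg.range_eq, image_univ]
  simpa only [hrange] using exists_continuous_path_of_good_windows ν (τ ∘ g)

/-- there is a `D̄`-continuous path of proper, generic, regular windows from `∅`
to `H`. -/
theorem stmt_15 {G : Type*} [Group G] [Countable G] [Infinite G]
    {H : Type*} [Group H] [MetricSpace H] [IsTopologicalGroup H] [CompactSpace H]
    [MeasurableSpace H] [BorelSpace H]
    (hinv : ∀ a x y : H, dist (a * x) (a * y) = dist x y)
    (ν : Measure H) [ν.IsHaarMeasure] [IsProbabilityMeasure ν]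
    (τ : G →* H) (hinj : Function.Injective ⇑τ) (hdense : DenseRange ⇑τ) :
    ∃ A : ℝ → Set H,
      A 0 = ∅ ∧ A 1 = Set.univ ∧
      (∀ t ∈ Set.Icc (0 : ℝ) 1, IsCompact (A t) ∧ A t = closure (interior (A t)) ∧
        frontier (A t) ∩ Set.range ⇑τ = ∅ ∧ ν (frontier (A t)) = 0) ∧
      (∀ ε > (0 : ℝ), ∃ δ > (0 : ℝ), ∀ t ∈ Set.Icc (0 : ℝ) 1, ∀ s ∈ Set.Icc (0 : ℝ) 1,
        |t - s| < δ → (ν (closure (A t ∆ A s))).toReal < ε) :=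
  stmt_15_general ν τ hinj
end
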